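/- arXiv:1110.6327 — 5 statements merged into one kernel-verified Lean document; each statement's English description precedes it below -/
import Mathlib

section
/- Let φ = (1+√5)/2 and write A = −φ, B = −φ+1, C = 0. A sequence X₁X₂X₃… ∈ {A, B, C}^ℕ satisfies d_G(x) = X₁X₂X₃… for some x ∈ [−1, 0) if and only if there is no index i with X_i = B and X_{i+1} = C, there is no index i with X_j = B for all j ≥ i, and there is no index i with X_j = C for all j ≥ i (i.e., the sequence contains no factor BC and no suffix B^ω or C^ω). -/
/-!
The digits `A = -φ`, `B = -φ + 1`, `C = 0` are read on `[-1, -1/φ)`, `[-1/φ, -1/φ²)`,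
`[-1/φ², 0)`, and `T_G` maps each of these intervals onto `[-1, 0)`, except that the `B`-interval
goes onto `[-1, -1/φ²)`: this is where the forbidden factor `BC` comes from. A tail `B^ω` or `C^ω`
would force the orbit to sit at the fixed point `-1/φ²` resp. `0` of the corresponding expanding
affine branch, both excluded from their intervals. Conversely, an admissible sequence is the
expansion of `∑ X_k φ^(-2(k+1))`; the three conditions are exactly what makes every tail of this
series fall into the half-open interval of its first digit.
-/

theorem Nat.forall_of_frequently_of_imp_succ {P Q : ℕ → Prop} (hQ : ∀ n, ∃ j, n ≤ j ∧ Q j)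
    (base : ∀ n, Q n → P n) (step : ∀ n, ¬ Q n → P (n + 1) → P n) (n : ℕ) : P n := by
  obtain ⟨j, hnj, hj⟩ := hQ n
  obtain ⟨d, rfl⟩ := Nat.exists_eq_add_of_le hnj
  induction d generalizing n with
  | zero => exact base n hj
  | succ d ih =>
    by_cases hn : Q n
    · exact base n hn
    · exact step n hn (ih (n + 1) (by omega) (by rwa [Nat.add_right_comm, Nat.add_assoc]))

theorem eq_of_sub_eq_mul_of_abs_le {z : ℕ → ℝ} {a p M : ℝ} (ha : 1 < a)
    (hz : ∀ n, z (n + 1) - p = a * (z n - p)) (hM : ∀ n, |z n - p| ≤ M) : z 0 = p := by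
  have hpow : ∀ n, z n - p = a ^ n * (z 0 - p) := by
    intro n
    induction n with
    | zero => ring
    | succ n ih => rw [hz, ih, pow_succ]; ring
  by_contra h
  have hpos : 0 < |z 0 - p| := abs_pos.2 (sub_ne_zero.2 h)
  obtain ⟨n, hn⟩ := pow_unbounded_of_one_lt (M / |z 0 - p|) ha
  have hle := hM n
  rw [hpow, abs_mul, abs_of_pos (pow_pos (by linarith) n)] at hle
  rw [div_lt_iff₀ hpos] at hn
  linarith

noncomputable def betaTail (β : ℝ) (X : ℕ → ℝ) (n : ℕ) : ℝ :=
  ∑' k, X (n + k) / β ^ (k + 1)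

section BetaTail

variable {β a b : ℝ} {X : ℕ → ℝ}

theorem hasSum_one_div_pow_succ (hβ : 1 < β) :
    HasSum (fun k : ℕ => 1 / β ^ (k + 1)) (1 / (β - 1)) := by
  have hβ0 : 0 < β := by linarith
  have hgeo :=
    (hasSum_geometric_of_lt_one (inv_nonneg.2 hβ0.le) (inv_lt_one_of_one_lt₀ hβ)).mul_left β⁻¹
  have hterm : (fun k : ℕ => 1 / β ^ (k + 1)) = fun k => β⁻¹ * β⁻¹ ^ k := by
    ext k; rw [one_div, pow_succ', mul_inv, inv_pow]
  have hsum : 1 / (β - 1) = β⁻¹ * (1 - β⁻¹)⁻¹ := by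
    have : β - 1 ≠ 0 := by linarith
    field_simp
  rwa [hterm, hsum]

theorem summable_betaTail (hβ : 1 < β) (hX : ∀ k, X k ∈ Set.Icc a b) (n : ℕ) :
    Summable fun k => X (n + k) / β ^ (k + 1) := by
  refine Summable.of_norm_bounded ((hasSum_one_div_pow_succ hβ).summable.mul_left (|a| + |b|))
    fun k => ?_
  have hXk : |X (n + k)| ≤ |a| + |b| := by
    obtain ⟨h₁, h₂⟩ := hX (n + k)
    rw [abs_le]
    constructor <;> linarith [neg_abs_le a, le_abs_self b, abs_nonneg a, abs_nonneg b]
  have hpow : 0 < β ^ (k + 1) := pow_pos (by linarith) _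
  rw [Real.norm_eq_abs, abs_div, abs_of_pos hpow, mul_one_div]
  exact div_le_div_of_nonneg_right hXk hpow.le

theorem betaTail_eq (hβ : 1 < β) (hX : ∀ k, X k ∈ Set.Icc a b) (n : ℕ) :
    betaTail β X n = (X n + betaTail β X (n + 1)) / β := by
  rw [betaTail, (summable_betaTail hβ hX n).tsum_eq_zero_add, betaTail, add_div,
    ← tsum_div_const]
  congr 1
  · simp
  · refine tsum_congr fun k => ?_
    rw [pow_succ _ (k + 1), div_div, Nat.add_right_comm, Nat.add_assoc]

theorem betaTail_mem_Icc (hβ : 1 < β) (hX : ∀ k, X k ∈ Set.Icc a b) (n : ℕ) :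
    betaTail β X n ∈ Set.Icc (a / (β - 1)) (b / (β - 1)) := by
  have hsum := summable_betaTail hβ hX n
  have hgeo (c : ℝ) : HasSum (fun k : ℕ => c / β ^ (k + 1)) (c / (β - 1)) := by
    simpa only [mul_one_div] using (hasSum_one_div_pow_succ hβ).mul_left c
  have hpow (k : ℕ) : 0 < β ^ (k + 1) := pow_pos (by linarith) _
  constructor
  · exact hasSum_le (fun k => div_le_div_of_nonneg_right (hX _).1 (hpow k).le) (hgeo a)
      hsum.hasSum
  · exact hasSum_le (fun k => div_le_div_of_nonneg_right (hX _).2 (hpow k).le) hsum.hasSum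
      (hgeo b)

theorem betaTail_neg (hβ : 1 < β) (hX : ∀ k, X k ∈ Set.Icc a 0) {n j : ℕ} (hj : n ≤ j)
    (hXj : X j < 0) : betaTail β X n < 0 := by
  obtain ⟨k, rfl⟩ := Nat.exists_eq_add_of_le hj
  have hpow (i : ℕ) : 0 < β ^ (i + 1) := pow_pos (by linarith) _
  exact hasSum_lt (f := fun i => X (n + i) / β ^ (i + 1)) (g := 0) (i := k)
    (fun i => div_nonpos_of_nonpos_of_nonneg (hX _).2 (hpow i).le)
    (div_neg_of_neg_of_pos hXj (hpow k))
    (summable_betaTail hβ hX n).hasSum hasSum_zero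

end BetaTail

section GoldenGreedy

open Real goldenRatio

noncomputable def greedyDigit (x : ℝ) : ℝ :=
  if x < -(1 / φ) then -φ else if x < -(1 / φ ^ 2) then -φ + 1 else if x < 0 then 0 else 1

noncomputable def greedyMap (x : ℝ) : ℝ := φ ^ 2 * x - greedyDigit x

def IsGreedyAdmissible (X : ℕ → ℝ) : Prop :=
  (¬ ∃ i, X i = -φ + 1 ∧ X (i + 1) = 0) ∧
    (¬ ∃ i, ∀ j, i ≤ j → X j = -φ + 1) ∧ (¬ ∃ i, ∀ j, i ≤ j → X j = 0)

theorem three_halves_lt_goldenRatio : 3 / 2 < φ := by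
  nlinarith [goldenRatio_sq, goldenRatio_pos]

theorem one_div_goldenRatio : 1 / φ = φ - 1 := by
  rw [div_eq_iff goldenRatio_ne_zero]; linear_combination -goldenRatio_sq

theorem one_div_goldenRatio_sq : 1 / φ ^ 2 = 2 - φ := by
  rw [div_eq_iff (pow_ne_zero 2 goldenRatio_ne_zero)]; linear_combination (φ - 1) * goldenRatio_sq

theorem one_lt_goldenRatio_sq : 1 < φ ^ 2 := one_lt_pow₀ one_lt_goldenRatio two_ne_zero

theorem greedyDigit_eq_neg_iff {x : ℝ} : greedyDigit x = -φ ↔ x < -(1 / φ) := by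
  have := three_halves_lt_goldenRatio
  rw [greedyDigit, one_div_goldenRatio, one_div_goldenRatio_sq]
  split_ifs <;> constructor <;> intro <;> first | rfl | linarith

theorem greedyDigit_eq_neg_add_one_iff {x : ℝ} :
    greedyDigit x = -φ + 1 ↔ x ∈ Set.Ico (-(1 / φ)) (-(1 / φ ^ 2)) := by
  have := three_halves_lt_goldenRatio
  rw [greedyDigit, one_div_goldenRatio, one_div_goldenRatio_sq, Set.mem_Ico]
  split_ifs <;> constructor <;> intro h <;>
    first | exact ⟨by linarith, by linarith⟩ | linarith [h.1, h.2]

theorem greedyDigit_eq_zero_iff {x : ℝ} :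
    greedyDigit x = 0 ↔ x ∈ Set.Ico (-(1 / φ ^ 2)) 0 := by
  have := three_halves_lt_goldenRatio
  rw [greedyDigit, one_div_goldenRatio, one_div_goldenRatio_sq, Set.mem_Ico]
  split_ifs <;> constructor <;> intro h <;>
    first | exact ⟨by linarith, by linarith⟩ | linarith [h.1, h.2]

theorem mapsTo_greedyMap : Set.MapsTo greedyMap (Set.Ico (-1) 0) (Set.Ico (-1) 0) := by
  intro x ⟨hx₁, hx₂⟩
  have := three_halves_lt_goldenRatio
  rw [greedyMap, greedyDigit, one_div_goldenRatio, one_div_goldenRatio_sq, Set.mem_Ico]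
  split_ifs <;> constructor <;> nlinarith [goldenRatio_sq, goldenRatio_pos]

theorem greedyMap_lt_of_greedyDigit_eq_neg_add_one {x : ℝ} (h : greedyDigit x = -φ + 1) :
    greedyMap x < -(1 / φ ^ 2) := by
  have hx := (greedyDigit_eq_neg_add_one_iff.1 h).2
  have hsq : 0 < φ ^ 2 := pow_pos goldenRatio_pos 2
  have : φ ^ 2 * x < -1 := by
    calc φ ^ 2 * x < φ ^ 2 * -(1 / φ ^ 2) := mul_lt_mul_of_pos_left hx hsq
      _ = -1 := by rw [mul_neg, mul_one_div_cancel hsq.ne']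
  rw [greedyMap, h, one_div_goldenRatio_sq]
  linarith

/-- `d / φ` is the fixed point of the branch `x ↦ φ² x - d`. -/
theorem iterate_greedyMap_eq_of_greedyDigit_eq {x d : ℝ} {i : ℕ} (hx : x ∈ Set.Ico (-1) 0)
    (hd : ∀ j, i ≤ j → greedyDigit (greedyMap^[j] x) = d) : greedyMap^[i] x = d / φ := by
  have hmem (k : ℕ) : greedyMap^[i + k] x ∈ Set.Ico (-1) 0 := mapsTo_greedyMap.iterate _ hx
  have hz (k : ℕ) : greedyMap^[i + (k + 1)] x - d / φ = φ ^ 2 * (greedyMap^[i + k] x - d / φ) := by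
    rw [← Nat.add_assoc, Function.iterate_succ_apply', greedyMap, hd _ (Nat.le_add_right _ _)]
    rw [div_eq_mul_one_div d φ, one_div_goldenRatio]
    linear_combination d * φ * goldenRatio_sq
  have hM (k : ℕ) : |greedyMap^[i + k] x - d / φ| ≤ 1 + |d / φ| := by
    have : |greedyMap^[i + k] x| ≤ 1 := abs_le.2 ⟨(hmem k).1, (hmem k).2.le.trans zero_le_one⟩
    linarith [abs_sub (greedyMap^[i + k] x) (d / φ)]
  simpa using eq_of_sub_eq_mul_of_abs_le (z := fun k => greedyMap^[i + k] x)
    one_lt_goldenRatio_sq hz hM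

theorem isGreedyAdmissible_greedyDigit_iterate {x : ℝ} (hx : x ∈ Set.Ico (-1) 0) :
    IsGreedyAdmissible fun k => greedyDigit (greedyMap^[k] x) := by
  refine ⟨?_, ?_, ?_⟩
  · rintro ⟨i, hB, hC⟩
    have hlt := greedyMap_lt_of_greedyDigit_eq_neg_add_one hB
    rw [← Function.iterate_succ_apply' greedyMap] at hlt
    linarith [(greedyDigit_eq_zero_iff.1 hC).1]
  · rintro ⟨i, hi⟩
    have hlt := (greedyDigit_eq_neg_add_one_iff.1 (hi i le_rfl)).2
    have hfix : (-φ + 1) / φ = -(1 / φ ^ 2) := by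
      rw [one_div_goldenRatio_sq, div_eq_iff goldenRatio_ne_zero]
      linear_combination -goldenRatio_sq
    rw [iterate_greedyMap_eq_of_greedyDigit_eq hx hi, hfix] at hlt
    exact lt_irrefl _ hlt
  · rintro ⟨i, hi⟩
    have hlt := (greedyDigit_eq_zero_iff.1 (hi i le_rfl)).2
    rw [iterate_greedyMap_eq_of_greedyDigit_eq hx hi, zero_div] at hlt
    exact lt_irrefl _ hlt

theorem mem_Icc_of_digit {d : ℝ} (hd : d = -φ ∨ d = -φ + 1 ∨ d = 0) : d ∈ Set.Icc (-φ) 0 := by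
  rcases hd with rfl | rfl | rfl <;> constructor <;> linarith [one_lt_goldenRatio]

theorem greedyDigit_add_div_goldenRatio_sq {d y : ℝ} (hd : d = -φ ∨ d = -φ + 1 ∨ d = 0)
    (hy : y ∈ Set.Ico (-1) 0) (hB : d = -φ + 1 → y < -(1 / φ ^ 2)) :
    greedyDigit ((d + y) / φ ^ 2) = d := by
  obtain ⟨hy₁, hy₂⟩ := hy
  have h2φ : 0 < 2 - φ := by linarith [goldenRatio_lt_two]
  have hφ := three_halves_lt_goldenRatio
  rw [div_eq_mul_one_div, one_div_goldenRatio_sq]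
  rw [one_div_goldenRatio_sq] at hB
  rcases hd with rfl | rfl | rfl
  · rw [greedyDigit_eq_neg_iff, one_div_goldenRatio]
    nlinarith [goldenRatio_sq, mul_neg_of_neg_of_pos hy₂ h2φ]
  · rw [greedyDigit_eq_neg_add_one_iff, one_div_goldenRatio, one_div_goldenRatio_sq]
    constructor <;> nlinarith [goldenRatio_sq, mul_le_mul_of_nonneg_right hy₁ h2φ.le,
      mul_lt_mul_of_pos_right (hB rfl) h2φ]
  · rw [greedyDigit_eq_zero_iff, one_div_goldenRatio_sq]
    constructor <;> nlinarith [goldenRatio_sq, mul_le_mul_of_nonneg_right hy₁ h2φ.le,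
      mul_neg_of_neg_of_pos hy₂ h2φ]

theorem greedyMap_add_div_goldenRatio_sq {d y : ℝ} (h : greedyDigit ((d + y) / φ ^ 2) = d) :
    greedyMap ((d + y) / φ ^ 2) = y := by
  rw [greedyMap, h, mul_div_cancel₀ _ (pow_ne_zero 2 goldenRatio_ne_zero)]
  ring

theorem betaTail_goldenRatio_sq_mem_Icc {X : ℕ → ℝ} (hX : ∀ k, X k ∈ Set.Icc (-φ) 0) (n : ℕ) :
    betaTail (φ ^ 2) X n ∈ Set.Icc (-1) 0 := by
  have hφ : φ ^ 2 - 1 = φ := by linear_combination goldenRatio_sq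
  simpa only [hφ, neg_div, div_self goldenRatio_ne_zero, zero_div] using
    betaTail_mem_Icc one_lt_goldenRatio_sq hX n

/-- Backward induction from the next digit `-φ`: each digit `-φ + 1` before it is followed by a
nonzero digit. -/
theorem betaTail_goldenRatio_sq_lt {X : ℕ → ℝ} (hX : ∀ i, X i = -φ ∨ X i = -φ + 1 ∨ X i = 0)
    (hBC : ¬ ∃ i, X i = -φ + 1 ∧ X (i + 1) = 0) (hB : ¬ ∃ i, ∀ j, i ≤ j → X j = -φ + 1)
    (hneg : ∀ n, betaTail (φ ^ 2) X n < 0) {n : ℕ} (hn : X n ≠ 0) :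
    betaTail (φ ^ 2) X n < -(1 / φ ^ 2) := by
  push Not at hB
  have hrec := betaTail_eq one_lt_goldenRatio_sq fun k => mem_Icc_of_digit (hX k)
  have hsq : 0 < φ ^ 2 := pow_pos goldenRatio_pos 2
  have hlt_iff (c : ℝ) : c / φ ^ 2 < -(1 / φ ^ 2) ↔ c < -1 := by
    rw [← neg_div, div_lt_div_iff_of_pos_right hsq]
  refine Nat.forall_of_frequently_of_imp_succ (Q := fun m => X m ≠ -φ + 1)
    (P := fun m => X m ≠ 0 → betaTail (φ ^ 2) X m < -(1 / φ ^ 2)) hB ?_ ?_ n hn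
  · intro m hmB hm0
    have hA : X m = -φ := (hX m).resolve_right (not_or.2 ⟨hmB, hm0⟩)
    rw [hrec, hA, hlt_iff]
    linarith [hneg (m + 1), one_lt_goldenRatio]
  · intro m hmB hP _
    have hB' : X m = -φ + 1 := not_not.1 hmB
    have hlt := hP fun h0 => hBC ⟨m, hB', h0⟩
    rw [one_div_goldenRatio_sq] at hlt
    rw [hrec, hB', hlt_iff]
    linarith

theorem exists_greedyDigit_iterate_eq {X : ℕ → ℝ} (hX : ∀ i, X i = -φ ∨ X i = -φ + 1 ∨ X i = 0)
    (hadm : IsGreedyAdmissible X) :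
    ∃ x ∈ Set.Ico (-1) 0, ∀ k, greedyDigit (greedyMap^[k] x) = X k := by
  obtain ⟨hBC, hB, hC⟩ := hadm
  set y := betaTail (φ ^ 2) X
  have hIcc (k : ℕ) : X k ∈ Set.Icc (-φ) 0 := mem_Icc_of_digit (hX k)
  have hrec (n : ℕ) : y n = (X n + y (n + 1)) / φ ^ 2 := betaTail_eq one_lt_goldenRatio_sq hIcc n
  have hneg (n : ℕ) : y n < 0 := by
    push Not at hC
    obtain ⟨j, hj, hXj⟩ := hC n
    exact betaTail_neg one_lt_goldenRatio_sq hIcc hj (lt_of_le_of_ne (hIcc j).2 hXj)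
  have hmem (n : ℕ) : y n ∈ Set.Ico (-1) 0 := ⟨(betaTail_goldenRatio_sq_mem_Icc hIcc n).1, hneg n⟩
  have hdigit (n : ℕ) : greedyDigit ((X n + y (n + 1)) / φ ^ 2) = X n :=
    greedyDigit_add_div_goldenRatio_sq (hX n) (hmem (n + 1)) fun hXn =>
      betaTail_goldenRatio_sq_lt hX hBC hB hneg fun h0 => hBC ⟨n, hXn, h0⟩
  have hiter (k : ℕ) : greedyMap^[k] (y 0) = y k := by
    induction k with
    | zero => rfl
    | succ k ih =>
      rw [Function.iterate_succ_apply', ih, hrec k, greedyMap_add_div_goldenRatio_sq (hdigit k)]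
  exact ⟨y 0, hmem 0, fun k => by rw [hiter, hrec, hdigit]⟩

end GoldenGreedy

theorem stmt13 (φ : ℝ) (hφ : φ = (1 + Real.sqrt 5) / 2)
    (DG TG : ℝ → ℝ)
    (hDG : ∀ x, DG x =
      if x < -(1 / φ) then -φ else if x < -(1 / φ ^ 2) then -φ + 1 else if x < 0 then 0 else 1)
    (hTG : ∀ x, TG x = φ ^ 2 * x - DG x)
    (X : ℕ → ℝ) (hX : ∀ i, X i = -φ ∨ X i = -φ + 1 ∨ X i = 0) :
    (∃ x ∈ Set.Ico (-1 : ℝ) 0, ∀ k, DG (TG^[k] x) = X k) ↔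
      ((¬ ∃ i, X i = -φ + 1 ∧ X (i + 1) = 0) ∧
        (¬ ∃ i, ∀ j, i ≤ j → X j = -φ + 1) ∧
        (¬ ∃ i, ∀ j, i ≤ j → X j = 0)) := by
  obtain rfl : φ = Real.goldenRatio := hφ
  obtain rfl : DG = greedyDigit := funext hDG
  obtain rfl : TG = greedyMap := funext fun x => by rw [hTG, greedyMap]
  constructor
  · rintro ⟨x, hx, hd⟩
    obtain rfl : (fun k => greedyDigit (greedyMap^[k] x)) = X := funext hd
    exact isGreedyAdmissible_greedyDigit_iterate hx
  · exact exists_greedyDigit_iterate_eq hX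
end

section
/- Let φ = (1+√5)/2. The only points x ∈ [−1, 1/φ] for which R_{−φ,{0,1}}(x) is a singleton (i.e., x has a unique (−φ)-representation over the alphabet {0,1}) are x = −1 and x = 1/φ. -/
/-!
Write `ψ = -1/φ`, so that a `(-φ)`-representation of `x` is a 0-1 sequence `t` with
`x = ∑ tᵢ ψ^(i+1)`, and `x = ψ (t₀ + x')` where `x'` is the value of the tail.  All values lie in
`I = [-1, -ψ]`, whose endpoints are the extreme values, each attained only by an alternating
sequence.  Every point of `I` has a representation (greedily), and `y = ψ (d + z)` with `z ∈ I`
is possible for both digits `d` exactly when `y` lies in the switch region `[-ψ², 0]`.  So the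
tails of a unique representation never enter the switch region.  Such a tail lying in
`(0, -ψ)` is forced to continue with the digits `0, 1` and returns to `(0, -ψ)` with its distance
to `-ψ` multiplied by `φ² > 1`, which cannot go on forever; hence only the endpoints remain.
-/

namespace NegGoldenExpansion

open Set Filter Topology

def IsBinary (t : ℕ → ℝ) : Prop := ∀ i, t i = 0 ∨ t i = 1

noncomputable def digitSum (q : ℝ) (t : ℕ → ℝ) : ℝ := ∑' i, t i * q ^ (i + 1)

/-- The set `R_{β,{0,1}}(x)` of `β`-representations of `x`, written with `q = β⁻¹`. -/
def representations (q x : ℝ) : Set (ℕ → ℝ) := {t | IsBinary t ∧ x = digitSum q t}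

def shift (t : ℕ → ℝ) (n : ℕ) : ℕ → ℝ := fun i => t (i + n)

def splice (s u : ℕ → ℝ) (n : ℕ) : ℕ → ℝ := fun i => if i < n then s i else u (i - n)

def evenDigits : ℕ → ℝ := fun i => if Even i then 1 else 0

def oddDigits : ℕ → ℝ := fun i => if Even i then 0 else 1

section General

variable {q : ℝ} {s t u : ℕ → ℝ}

lemma IsBinary.nonneg (ht : IsBinary t) (i : ℕ) : 0 ≤ t i := by
  rcases ht i with h | h <;> simp [h]

lemma IsBinary.le_one (ht : IsBinary t) (i : ℕ) : t i ≤ 1 := by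
  rcases ht i with h | h <;> simp [h]

lemma IsBinary.shift (ht : IsBinary t) (n : ℕ) : IsBinary (shift t n) := fun i => ht (i + n)

lemma IsBinary.splice (hs : IsBinary s) (hu : IsBinary u) (n : ℕ) :
    IsBinary (splice s u n) := fun i => by
  unfold NegGoldenExpansion.splice
  split_ifs
  exacts [hs i, hu (i - n)]

lemma isBinary_evenDigits : IsBinary evenDigits := fun i => by
  unfold evenDigits; split_ifs <;> simp

lemma isBinary_oddDigits : IsBinary oddDigits := fun i => by
  unfold oddDigits; split_ifs <;> simp

lemma shift_shift (t : ℕ → ℝ) (m n : ℕ) : shift (shift t m) n = shift t (m + n) :=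
  funext fun i => congrArg t (by omega)

lemma shift_splice (s u : ℕ → ℝ) (n : ℕ) : shift (splice s u n) n = u :=
  funext fun i => by simp [shift, splice]

lemma shift_evenDigits_one : shift evenDigits 1 = oddDigits :=
  funext fun i => by by_cases h : Even i <;> simp [shift, evenDigits, oddDigits, Nat.even_add_one, h]

lemma shift_oddDigits_one : shift oddDigits 1 = evenDigits :=
  funext fun i => by by_cases h : Even i <;> simp [shift, evenDigits, oddDigits, Nat.even_add_one, h]

lemma summable_digits (hq : |q| < 1) (ht : IsBinary t) :
    Summable fun i => t i * q ^ (i + 1) := by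
  refine Summable.of_norm_bounded (summable_geometric_of_lt_one (abs_nonneg q) hq) fun i => ?_
  rw [norm_mul, norm_pow, Real.norm_eq_abs, Real.norm_eq_abs, abs_of_nonneg (ht.nonneg i)]
  calc t i * |q| ^ (i + 1) ≤ 1 * |q| ^ i :=
        mul_le_mul (ht.le_one i) (pow_le_pow_of_le_one (abs_nonneg q) hq.le i.le_succ)
          (by positivity) zero_le_one
    _ = |q| ^ i := one_mul _

lemma digitSum_eq_sum_add (hq : |q| < 1) (ht : IsBinary t) (n : ℕ) :
    digitSum q t = ∑ i ∈ Finset.range n, t i * q ^ (i + 1) + q ^ n * digitSum q (shift t n) := by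
  rw [digitSum, ← (summable_digits hq ht).sum_add_tsum_nat_add n, digitSum, ← tsum_mul_left]
  congr 1
  exact tsum_congr fun i => by simp only [shift]; ring

lemma digitSum_eq_mul_add (hq : |q| < 1) (ht : IsBinary t) :
    digitSum q t = q * (t 0 + digitSum q (shift t 1)) := by
  rw [digitSum_eq_sum_add hq ht 1, Finset.sum_range_one]
  ring

lemma digitSum_shift_eq_mul_add (hq : |q| < 1) (ht : IsBinary t) (n : ℕ) :
    digitSum q (shift t n) = q * (t n + digitSum q (shift t (n + 1))) := by
  rw [digitSum_eq_mul_add hq (ht.shift n), shift_shift]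
  simp [shift]

lemma digitSum_splice (hq : |q| < 1) (hs : IsBinary s) (hu : IsBinary u) (n : ℕ) :
    digitSum q (splice s u n) = ∑ i ∈ Finset.range n, s i * q ^ (i + 1) + q ^ n * digitSum q u := by
  rw [digitSum_eq_sum_add hq (hs.splice hu n) n, shift_splice]
  congr 1
  exact Finset.sum_congr rfl fun i hi => by rw [splice, if_pos (Finset.mem_range.1 hi)]

lemma eq_digitSum_of_bounded {d w : ℕ → ℝ} {C : ℝ} (hq : |q| < 1) (hd : IsBinary d)
    (hw : ∀ n, |w n| ≤ C) (hrec : ∀ n, w n = q * (d n + w (n + 1))) : w 0 = digitSum q d := by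
  have hpartial : ∀ n, w 0 = ∑ i ∈ Finset.range n, d i * q ^ (i + 1) + q ^ n * w n := by
    intro n
    induction n with
    | zero => simp
    | succ n ih => rw [ih, hrec n, Finset.sum_range_succ]; ring
  have hrem : Tendsto (fun n => q ^ n * w n) atTop (𝓝 0) := by
    refine squeeze_zero_norm (a := fun n => |q| ^ n * C) (fun n => ?_) ?_
    · rw [norm_mul, norm_pow, Real.norm_eq_abs, Real.norm_eq_abs]
      exact mul_le_mul_of_nonneg_left (hw n) (by positivity)
    · simpa using (tendsto_pow_atTop_nhds_zero_of_lt_one (abs_nonneg q) hq).mul_const C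
  have hlim := (summable_digits hq hd).hasSum.tendsto_sum_nat.add hrem
  rw [add_zero] at hlim
  exact tendsto_nhds_unique (tendsto_const_nhds.congr hpartial) hlim

lemma shift_eq_of_representations_eq_singleton {x : ℝ} {n : ℕ} (hq : |q| < 1)
    (hs : representations q x = {s}) (hu : IsBinary u)
    (hval : digitSum q u = digitSum q (shift s n)) : u = shift s n := by
  obtain ⟨hsb, hx⟩ : s ∈ representations q x := hs ▸ rfl
  have hspl : splice s u n ∈ representations q x := by
    refine ⟨hsb.splice hu n, ?_⟩
    rw [digitSum_splice hq hsb hu, hval, ← digitSum_eq_sum_add hq hsb, hx]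
  rw [hs, mem_singleton_iff] at hspl
  rw [← hspl, shift_splice]

lemma evenDigits_mul_pow_lt (hq : q < 0) (ht : IsBinary t) {i : ℕ} (hi : t i ≠ evenDigits i) :
    evenDigits i * q ^ (i + 1) < t i * q ^ (i + 1) := by
  rcases Nat.even_or_odd i with he | ho
  · have ht0 : t i = 0 := (ht i).resolve_right (by simpa [evenDigits, he] using hi)
    simpa [evenDigits, he, ht0] using he.add_one.pow_neg hq
  · have ht1 : t i = 1 :=
      (ht i).resolve_left (by simpa [evenDigits, Nat.not_even_iff_odd.2 ho] using hi)
    simpa [evenDigits, Nat.not_even_iff_odd.2 ho, ht1] using ho.add_one.pow_pos hq.ne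

lemma mul_pow_lt_oddDigits_mul_pow (hq : q < 0) (ht : IsBinary t) {i : ℕ}
    (hi : t i ≠ oddDigits i) : t i * q ^ (i + 1) < oddDigits i * q ^ (i + 1) := by
  rcases Nat.even_or_odd i with he | ho
  · have ht1 : t i = 1 := (ht i).resolve_left (by simpa [oddDigits, he] using hi)
    simpa [oddDigits, he, ht1] using he.add_one.pow_neg hq
  · have ht0 : t i = 0 :=
      (ht i).resolve_right (by simpa [oddDigits, Nat.not_even_iff_odd.2 ho] using hi)
    simpa [oddDigits, Nat.not_even_iff_odd.2 ho, ht0] using ho.add_one.pow_pos hq.ne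

lemma digitSum_evenDigits_lt (hq : -1 < q) (hq' : q < 0) (ht : IsBinary t)
    (hne : t ≠ evenDigits) : digitSum q evenDigits < digitSum q t := by
  have habs : |q| < 1 := abs_lt.2 ⟨hq, by linarith⟩
  obtain ⟨i, hi⟩ := Function.ne_iff.1 hne
  refine Summable.tsum_lt_tsum (i := i) (fun j => ?_) (evenDigits_mul_pow_lt hq' ht hi)
    (summable_digits habs isBinary_evenDigits) (summable_digits habs ht)
  rcases eq_or_ne (t j) (evenDigits j) with h | h
  · rw [h]
  · exact (evenDigits_mul_pow_lt hq' ht h).le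

lemma digitSum_lt_oddDigits (hq : -1 < q) (hq' : q < 0) (ht : IsBinary t)
    (hne : t ≠ oddDigits) : digitSum q t < digitSum q oddDigits := by
  have habs : |q| < 1 := abs_lt.2 ⟨hq, by linarith⟩
  obtain ⟨i, hi⟩ := Function.ne_iff.1 hne
  refine Summable.tsum_lt_tsum (i := i) (fun j => ?_) (mul_pow_lt_oddDigits_mul_pow hq' ht hi)
    (summable_digits habs ht) (summable_digits habs isBinary_oddDigits)
  rcases eq_or_ne (t j) (oddDigits j) with h | h
  · rw [h]
  · exact (mul_pow_lt_oddDigits_mul_pow hq' ht h).le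

lemma digitSum_evenDigits_le (hq : -1 < q) (hq' : q < 0) (ht : IsBinary t) :
    digitSum q evenDigits ≤ digitSum q t := by
  rcases eq_or_ne t evenDigits with rfl | hne
  · exact le_rfl
  · exact (digitSum_evenDigits_lt hq hq' ht hne).le

lemma digitSum_le_oddDigits (hq : -1 < q) (hq' : q < 0) (ht : IsBinary t) :
    digitSum q t ≤ digitSum q oddDigits := by
  rcases eq_or_ne t oddDigits with rfl | hne
  · exact le_rfl
  · exact (digitSum_lt_oddDigits hq hq' ht hne).le

end General

section Golden

open Real goldenRatio

variable {s t w : ℕ → ℝ} {x y : ℝ}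

lemma abs_goldenConj_lt_one : |ψ| < 1 :=
  abs_lt.2 ⟨neg_one_lt_goldenConj, goldenConj_neg.trans zero_lt_one⟩

lemma digitSum_goldenConj_evenDigits : digitSum ψ evenDigits = -1 := by
  have hE := digitSum_eq_mul_add abs_goldenConj_lt_one isBinary_evenDigits
  have hO := digitSum_eq_mul_add abs_goldenConj_lt_one isBinary_oddDigits
  rw [shift_evenDigits_one] at hE
  rw [shift_oddDigits_one] at hO
  simp only [evenDigits, oddDigits, Even.zero, if_true, zero_add] at hE hO
  have h : ψ * (digitSum ψ evenDigits + 1) = 0 := by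
    linear_combination (-1 : ℝ) * hE - ψ * hO - digitSum ψ evenDigits * goldenConj_sq
  linarith [(mul_eq_zero.1 h).resolve_left goldenConj_ne_zero]

lemma digitSum_goldenConj_oddDigits : digitSum ψ oddDigits = -ψ := by
  rw [digitSum_eq_mul_add abs_goldenConj_lt_one isBinary_oddDigits, shift_oddDigits_one,
    digitSum_goldenConj_evenDigits]
  simp [oddDigits]

lemma digitSum_goldenConj_mem_Icc (ht : IsBinary t) : digitSum ψ t ∈ Icc (-1) (-ψ) := by
  rw [← digitSum_goldenConj_evenDigits, ← digitSum_goldenConj_oddDigits]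
  exact ⟨digitSum_evenDigits_le neg_one_lt_goldenConj goldenConj_neg ht,
    digitSum_le_oddDigits neg_one_lt_goldenConj goldenConj_neg ht⟩

lemma representations_goldenConj_neg_one : representations ψ (-1) = {evenDigits} := by
  ext t
  refine ⟨fun ⟨ht, _⟩ => by_contra fun hne => ?_, ?_⟩
  · have := digitSum_evenDigits_lt neg_one_lt_goldenConj goldenConj_neg ht hne
    rw [digitSum_goldenConj_evenDigits] at this
    linarith
  · rintro rfl
    exact ⟨isBinary_evenDigits, digitSum_goldenConj_evenDigits.symm⟩

lemma representations_goldenConj_neg_goldenConj : representations ψ (-ψ) = {oddDigits} := by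
  ext t
  refine ⟨fun ⟨ht, _⟩ => by_contra fun hne => ?_, ?_⟩
  · have := digitSum_lt_oddDigits neg_one_lt_goldenConj goldenConj_neg ht hne
    rw [digitSum_goldenConj_oddDigits] at this
    linarith
  · rintro rfl
    exact ⟨isBinary_oddDigits, digitSum_goldenConj_oddDigits.symm⟩

noncomputable def greedyDigit (y : ℝ) : ℝ := if y ≤ 0 then 1 else 0

/-- The map `y ↦ -φ y - d` for the greedy digit `d`, as `-φ = ψ - 1`. -/
noncomputable def greedyStep (y : ℝ) : ℝ := (ψ - 1) * y - greedyDigit y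

lemma greedyStep_mem_Icc (hy : y ∈ Icc (-1) (-ψ)) : greedyStep y ∈ Icc (-1) (-ψ) := by
  have hψ := goldenConj_sq
  have hψ0 := goldenConj_neg
  obtain ⟨hl, hu⟩ := hy
  unfold greedyStep greedyDigit
  split_ifs with h
  · constructor <;> nlinarith
  · constructor <;> nlinarith

lemma eq_mul_greedyDigit_add_greedyStep (y : ℝ) : y = ψ * (greedyDigit y + greedyStep y) := by
  unfold greedyStep
  linear_combination (-y) * goldenConj_sq

lemma representations_goldenConj_nonempty (hy : y ∈ Icc (-1) (-ψ)) :
    (representations ψ y).Nonempty := by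
  have hmem : ∀ n, greedyStep^[n] y ∈ Icc (-1) (-ψ) := by
    intro n
    induction n with
    | zero => exact hy
    | succ n ih => rw [Function.iterate_succ_apply']; exact greedyStep_mem_Icc ih
  have hbin : IsBinary fun n => greedyDigit (greedyStep^[n] y) := fun n => by
    by_cases h : greedyStep^[n] y ≤ 0 <;> simp [greedyDigit, h]
  refine ⟨_, hbin, eq_digitSum_of_bounded (w := fun n => greedyStep^[n] y) (C := 1)
    abs_goldenConj_lt_one hbin (fun n => ?_) (fun n => ?_)⟩
  · obtain ⟨hl, hu⟩ := hmem n
    exact abs_le.2 ⟨hl, hu.trans (by linarith [neg_one_lt_goldenConj])⟩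
  · rw [Function.iterate_succ_apply']
    exact eq_mul_greedyDigit_add_greedyStep _

lemma exists_mem_representations_goldenConj_head_eq (hy : y ∈ Icc (-ψ ^ 2) 0) {d : ℝ}
    (hd : d = 0 ∨ d = 1) : ∃ t ∈ representations ψ y, t 0 = d := by
  have hψ := goldenConj_sq
  have hψ0 := goldenConj_neg
  obtain ⟨hl, hu⟩ := hy
  have hz : (ψ - 1) * y - d ∈ Icc (-1) (-ψ) := by
    rcases hd with rfl | rfl <;> constructor <;> nlinarith
  obtain ⟨r, hr, hrval⟩ := representations_goldenConj_nonempty hz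
  have hdb : IsBinary fun _ => d := fun _ => hd
  refine ⟨splice (fun _ => d) r 1, ⟨hdb.splice hr 1, ?_⟩, by simp [splice]⟩
  rw [digitSum_splice abs_goldenConj_lt_one hdb hr, ← hrval]
  simp only [Finset.sum_range_one, pow_one]
  linear_combination (-y) * hψ

lemma digit_eq_zero_of_pos {d z : ℝ} (hd : d = 0 ∨ d = 1) (hz : z ∈ Icc (-1) (-ψ))
    (hy : 0 < ψ * (d + z)) : d = 0 := by
  rcases hd with rfl | rfl
  · rfl
  · nlinarith [hz.1, goldenConj_neg]

lemma digit_eq_one_of_lt {d z : ℝ} (hd : d = 0 ∨ d = 1) (hz : z ∈ Icc (-1) (-ψ))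
    (hy : ψ * (d + z) < -ψ ^ 2) : d = 1 := by
  rcases hd with rfl | rfl
  · nlinarith [hz.2, goldenConj_neg]
  · rfl

/-- `w n` plays the role of the value of the `n`-th tail of `s`; `[-ψ², 0]` is the switch
region, where both digits are possible. -/
structure SwitchFreeOrbit (s w : ℕ → ℝ) : Prop where
  isBinary : IsBinary s
  mem_Icc : ∀ n, w n ∈ Icc (-1) (-ψ)
  eq_mul_add : ∀ n, w n = ψ * (s n + w (n + 1))
  not_mem_switch : ∀ n, w n ∉ Icc (-ψ ^ 2) 0

lemma switchFreeOrbit_of_representations_eq_singleton (hs : representations ψ x = {s}) :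
    SwitchFreeOrbit s fun n => digitSum ψ (shift s n) := by
  obtain ⟨hsb, -⟩ : s ∈ representations ψ x := hs ▸ rfl
  refine ⟨hsb, fun n => digitSum_goldenConj_mem_Icc (hsb.shift n),
    digitSum_shift_eq_mul_add abs_goldenConj_lt_one hsb, fun n hn => ?_⟩
  obtain ⟨t, ⟨ht, hval⟩, ht0⟩ := exists_mem_representations_goldenConj_head_eq hn
    (d := 1 - s n) (by rcases hsb n with h | h <;> simp [h])
  have hts := shift_eq_of_representations_eq_singleton abs_goldenConj_lt_one hs ht hval.symm
  have : s n = 1 - s n := by simpa [hts, shift] using ht0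
  rcases hsb n with h | h <;> linarith

namespace SwitchFreeOrbit

lemma mem_Ioo_add_two (h : SwitchFreeOrbit s w) {n : ℕ} (hn : w n ∈ Ioo 0 (-ψ)) :
    w (n + 2) ∈ Ioo 0 (-ψ) ∧ -ψ - w n = ψ ^ 2 * (-ψ - w (n + 2)) := by
  have hψ := goldenConj_sq
  have hψ0 := goldenConj_neg
  have e0 := h.eq_mul_add n
  have e1 := h.eq_mul_add (n + 1)
  have hs0 : s n = 0 := digit_eq_zero_of_pos (h.isBinary n) (h.mem_Icc _) (e0 ▸ hn.1)
  rw [hs0, zero_add] at e0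
  have hw1 : w (n + 1) < -ψ ^ 2 := by
    have hneg : w (n + 1) < 0 := by nlinarith [hn.1]
    exact not_le.1 fun hge => h.not_mem_switch (n + 1) ⟨hge, hneg.le⟩
  have hs1 : s (n + 1) = 1 := digit_eq_one_of_lt (h.isBinary _) (h.mem_Icc _) (e1 ▸ hw1)
  rw [hs1] at e1
  have hdist : -ψ - w n = ψ ^ 2 * (-ψ - w (n + 2)) := by
    rw [e0, e1]
    linear_combination ψ * hψ
  have hpos : 0 < w (n + 2) := by
    have hgt : -ψ ^ 2 < w (n + 2) := by nlinarith
    exact not_le.1 fun hle => h.not_mem_switch (n + 2) ⟨hgt.le, hle⟩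
  refine ⟨⟨hpos, ?_⟩, hdist⟩
  nlinarith [hn.2, sq_nonneg ψ]

lemma exists_mem_Ioo (h : SwitchFreeOrbit s w) (h₁ : w 0 ≠ -1) (h₂ : w 0 ≠ -ψ) :
    ∃ m, w m ∈ Ioo 0 (-ψ) := by
  have hψ := goldenConj_sq
  have hψ0 := goldenConj_neg
  obtain ⟨hl, hu⟩ := h.mem_Icc 0
  rcases lt_or_ge 0 (w 0) with hpos | hnonpos
  · exact ⟨0, hpos, lt_of_le_of_ne hu h₂⟩
  have hlt : w 0 < -ψ ^ 2 := not_le.1 fun hge => h.not_mem_switch 0 ⟨hge, hnonpos⟩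
  have e0 := h.eq_mul_add 0
  have hs0 : s 0 = 1 := digit_eq_one_of_lt (h.isBinary 0) (h.mem_Icc 1) (e0 ▸ hlt)
  rw [hs0] at e0
  have hgt : -1 < w 0 := lt_of_le_of_ne hl h₁.symm
  have hgt1 : -ψ ^ 2 < w 1 := by nlinarith
  exact ⟨1, not_le.1 fun hle => h.not_mem_switch 1 ⟨hgt1.le, hle⟩, by nlinarith⟩

lemma eq_neg_one_or_eq_neg_goldenConj (h : SwitchFreeOrbit s w) : w 0 = -1 ∨ w 0 = -ψ := by
  by_contra! hne
  obtain ⟨m, hm⟩ := h.exists_mem_Ioo hne.1 hne.2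
  have hiter : ∀ k, w (m + 2 * k) ∈ Ioo 0 (-ψ) ∧
      -ψ - w m = (ψ ^ 2) ^ k * (-ψ - w (m + 2 * k)) := by
    intro k
    induction k with
    | zero => simpa using hm
    | succ k ih =>
      obtain ⟨hmem, hdist⟩ := h.mem_Ioo_add_two ih.1
      rw [show m + 2 * (k + 1) = m + 2 * k + 2 by ring]
      exact ⟨hmem, by rw [ih.2, hdist]; ring⟩
  have hsq : ψ ^ 2 < 1 := by nlinarith [goldenConj_sq, goldenConj_neg]
  obtain ⟨k, hk⟩ := exists_pow_lt_of_lt_one (sub_pos.2 hm.2) hsq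
  obtain ⟨⟨hpos, -⟩, hdist⟩ := hiter k
  have : -ψ - w (m + 2 * k) < 1 := by linarith [neg_one_lt_goldenConj]
  nlinarith [pow_pos (sq_pos_of_neg goldenConj_neg) k]

end SwitchFreeOrbit

theorem exists_representations_goldenConj_eq_singleton_iff :
    (∃ s, representations ψ x = {s}) ↔ x = -1 ∨ x = -ψ := by
  constructor
  · rintro ⟨s, hs⟩
    obtain ⟨-, rfl⟩ : s ∈ representations ψ x := hs ▸ rfl
    exact (switchFreeOrbit_of_representations_eq_singleton hs).eq_neg_one_or_eq_neg_goldenConj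
  · rintro (rfl | rfl)
    exacts [⟨_, representations_goldenConj_neg_one⟩, ⟨_, representations_goldenConj_neg_goldenConj⟩]

end Golden

end NegGoldenExpansion

theorem stmt15_general (φ : ℝ) (hφ : φ = (1 + Real.sqrt 5) / 2)
    (x : ℝ) :
    (∃ s : ℕ → ℝ,
        {t : ℕ → ℝ | (∀ i, t i = 0 ∨ t i = 1) ∧ x = ∑' i : ℕ, t i / (-φ) ^ (i + 1)} = {s}) ↔
      (x = -1 ∨ x = 1 / φ) := by
  have hinv : (-φ)⁻¹ = Real.goldenConj := by rw [hφ, inv_neg, Real.inv_goldenRatio, neg_neg]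
  have hrepr : {t : ℕ → ℝ | (∀ i, t i = 0 ∨ t i = 1) ∧ x = ∑' i : ℕ, t i / (-φ) ^ (i + 1)} =
      NegGoldenExpansion.representations Real.goldenConj x := by
    simp_rw [div_eq_mul_inv, ← inv_pow, hinv]
    rfl
  rw [hrepr, hφ, one_div, Real.inv_goldenRatio]
  exact NegGoldenExpansion.exists_representations_goldenConj_eq_singleton_iff

theorem stmt15 (φ : ℝ) (hφ : φ = (1 + Real.sqrt 5) / 2)
    (x : ℝ) (hx : x ∈ Set.Icc (-1 : ℝ) (1 / φ)) :
    (∃ s : ℕ → ℝ,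
        {t : ℕ → ℝ | (∀ i, t i = 0 ∨ t i = 1) ∧ x = ∑' i : ℕ, t i / (-φ) ^ (i + 1)} = {s}) ↔
      (x = -1 ∨ x = 1 / φ) :=
  stmt15_general φ hφ x
end

section
/- Let φ = (1+√5)/2. A sequence x₁x₂x₃… ∈ {0,1}^ℕ is the greedy (−φ)-representation of some x ∈ [−1, 0) if and only if all of the following hold: (i) for no k ≥ 1 does the sequence begin with the prefix 1^{2k}0, and for no k ≥ 1 does it begin with the prefix 0^{2k−1}1; (ii) it has no suffix 0^ω and no suffix 1^ω; (iii) it contains no factor 10^{2k}1 and no factor 01^{2k}0 for any k ≥ 1. -/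
/-!
Write `v s = ∑ sᵢ (-φ)^-(i+1)`. Then `v s = -φ⁻¹ (s₀ + v (σ s))`, and the values of
`{0,1}`-sequences fill exactly `[-1, φ⁻¹]`, the end points being attained only by `1010…` and
`0101…`. At each index the alternate order prefers the digit of `0101…`, so `s` is greedy iff at
every `n` where `s` agrees with `1010…` the remainder cannot be represented starting with the
other digit; by the description of the range, this says that the indicator of
`{i | s (n + 1 + i) ≠ sₙ}` has negative value. A sequence `t` has `v t < 0` iff `t = 0ᵉ 1 t'` with
`e` even and `t' ≠ 1010…`. Unwinding this, `s` is greedy with `v s < 0` iff every digit change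
`sₙ ≠ sₙ₊₁` happens where `s` agrees with `1010…`, and there are infinitely many changes. The
first property is (i) together with (iii), the second is (ii).
-/

open Filter Real

/-- Alternate order on infinite sequences of reals. -/
def AltLt (x y : ℕ → ℝ) : Prop :=
  ∃ k, (∀ i < k, x i = y i) ∧ (-1 : ℝ) ^ (k + 1) * x k < (-1 : ℝ) ^ (k + 1) * y k

def IsBinary (s : ℕ → ℝ) : Prop := ∀ i, s i = 0 ∨ s i = 1

noncomputable def expansionValue (β : ℝ) (s : ℕ → ℝ) : ℝ := ∑' i, s i / β ^ (i + 1)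

def shift (n : ℕ) (s : ℕ → ℝ) : ℕ → ℝ := fun i => s (n + i)

@[simp] lemma shift_apply (n i : ℕ) (s : ℕ → ℝ) : shift n s i = s (n + i) := rfl

@[simp] lemma shift_zero (s : ℕ → ℝ) : shift 0 s = s := by
  ext i; simp

lemma shift_shift (m n : ℕ) (s : ℕ → ℝ) : shift m (shift n s) = shift (n + m) s := by
  ext i; simp [Nat.add_assoc]

namespace IsBinary

variable {s : ℕ → ℝ}

lemma nonneg (hs : IsBinary s) (i : ℕ) : 0 ≤ s i := by
  rcases hs i with h | h <;> simp [h]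

lemma le_one (hs : IsBinary s) (i : ℕ) : s i ≤ 1 := by
  rcases hs i with h | h <;> simp [h]

lemma shift (hs : IsBinary s) (n : ℕ) : IsBinary (shift n s) := fun i => hs (n + i)

lemma one_sub (hs : IsBinary s) : IsBinary (1 - s) := fun i => by
  rcases hs i with h | h <;> simp [h]

lemma eq_one_sub_of_ne {t : ℕ → ℝ} (hs : IsBinary s) (ht : IsBinary t) {i j : ℕ}
    (h : s i ≠ t j) : t j = 1 - s i := by
  rcases hs i with hi | hi <;> rcases ht j with hj | hj <;> simp_all

end IsBinary

section Expansion

variable {β : ℝ} {s w : ℕ → ℝ}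

lemma IsBinary.summable (hβ : 1 < |β|) (hs : IsBinary s) :
    Summable fun i => s i / β ^ (i + 1) := by
  have hβ0 : 0 < |β| := by linarith
  refine (summable_geometric_of_lt_one (inv_nonneg.2 hβ0.le)
    (inv_lt_one_of_one_lt₀ hβ)).of_norm_bounded fun i => ?_
  rw [norm_div, norm_pow, Real.norm_eq_abs, Real.norm_eq_abs, inv_pow, abs_of_nonneg (hs.nonneg i)]
  calc s i / |β| ^ (i + 1) ≤ 1 / |β| ^ i := by
        gcongr
        · exact hs.le_one i
        · exact le_of_lt hβ
        · omega
    _ = (|β| ^ i)⁻¹ := one_div _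

lemma expansionValue_eq (hβ : 1 < |β|) (hs : IsBinary s) :
    expansionValue β s = β⁻¹ * (s 0 + expansionValue β (shift 1 s)) := by
  have hβ0 : β ≠ 0 := by rintro rfl; simp at hβ; linarith
  rw [expansionValue, (hs.summable hβ).tsum_eq_zero_add, expansionValue, mul_add, ← tsum_mul_left]
  congr 1
  · simp [div_eq_inv_mul]
  · congr 1; ext i
    simp only [shift_apply, Nat.add_comm 1 i, pow_succ]
    field_simp

lemma expansionValue_sub_eq_of_eqOn (hβ : 1 < |β|) (hs : IsBinary s) (hw : IsBinary w) {n : ℕ}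
    (h : ∀ i < n, s i = w i) :
    expansionValue β s - expansionValue β w =
      (expansionValue β (shift n s) - expansionValue β (shift n w)) / β ^ n := by
  induction n generalizing s w with
  | zero => simp
  | succ n ih =>
    have ih' := ih (hs.shift 1) (hw.shift 1) fun i hi => h (1 + i) (by omega)
    rw [shift_shift, shift_shift, Nat.add_comm 1 n] at ih'
    rw [expansionValue_eq hβ hs, expansionValue_eq hβ hw, h 0 n.succ_pos, pow_succ',
      div_mul_eq_div_div_swap, ← ih', div_eq_inv_mul]
    ring

lemma expansionValue_eq_iff_of_eqOn (hβ : 1 < |β|) (hs : IsBinary s) (hw : IsBinary w) {n : ℕ}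
    (h : ∀ i < n, s i = w i) :
    expansionValue β s = expansionValue β w ↔
      expansionValue β (shift n s) = expansionValue β (shift n w) := by
  have hβ0 : β ≠ 0 := by rintro rfl; simp at hβ; linarith
  rw [← sub_eq_zero, expansionValue_sub_eq_of_eqOn hβ hs hw h, div_eq_zero_iff, sub_eq_zero,
    or_iff_left (pow_ne_zero _ hβ0)]

lemma expansionValue_zero : expansionValue β 0 = 0 := by simp [expansionValue]

lemma expansionValue_eq_div_of_forall_lt_eq_zero (hβ : 1 < |β|) (hs : IsBinary s) {e : ℕ}
    (h : ∀ i < e, s i = 0) : expansionValue β s = expansionValue β (shift e s) / β ^ e := by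
  have := expansionValue_sub_eq_of_eqOn (w := 0) hβ hs (fun _ => Or.inl rfl) h
  rwa [show shift e (0 : ℕ → ℝ) = 0 from rfl, expansionValue_zero, sub_zero, sub_zero] at this

lemma expansionValue_one_sub (hβ : 1 < |β|) (hs : IsBinary s) :
    expansionValue β (1 - s) = expansionValue β 1 - expansionValue β s := by
  have h1 : IsBinary (1 : ℕ → ℝ) := fun _ => Or.inr rfl
  simp only [expansionValue, Pi.sub_apply, sub_div]
  exact (h1.summable hβ).tsum_sub (hs.summable hβ)

end Expansion

section Alternating

variable {s : ℕ → ℝ}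

noncomputable def alt10 : ℕ → ℝ := fun i => if Even i then 1 else 0

lemma alt10_of_even {i : ℕ} (hi : Even i) : alt10 i = 1 := if_pos hi

lemma alt10_of_odd {i : ℕ} (hi : Odd i) : alt10 i = 0 := if_neg (Nat.not_even_iff_odd.2 hi)

lemma alt10_zero : alt10 0 = 1 := alt10_of_even Even.zero

lemma alt10_add_one (i : ℕ) : alt10 (i + 1) = 1 - alt10 i := by
  rcases Nat.even_or_odd i with hi | hi
  · rw [alt10_of_even hi, alt10_of_odd hi.add_one]; norm_num
  · rw [alt10_of_odd hi, alt10_of_even hi.add_one]; norm_num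

lemma alt10_add_eq_iff (n i : ℕ) : alt10 (n + i) = alt10 n ↔ Even i := by
  unfold alt10; by_cases hn : Even n <;> by_cases hi : Even i <;> simp [Nat.even_add, hn, hi]

lemma alt10_add_of_odd (n : ℕ) {i : ℕ} (hi : Odd i) : alt10 (n + i) = 1 - alt10 n := by
  obtain ⟨k, rfl⟩ := hi
  rw [← Nat.add_assoc, alt10_add_one, (alt10_add_eq_iff n _).2 (even_two_mul k)]

lemma isBinary_alt10 : IsBinary alt10 := fun i => by
  unfold alt10; split_ifs <;> simp

lemma shift_one_alt10 : shift 1 alt10 = 1 - alt10 := by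
  ext i; rw [shift_apply, Nat.add_comm, alt10_add_one]; rfl

lemma shift_one_one_sub_alt10 : shift 1 (1 - alt10) = alt10 := by
  ext i; simp [Nat.add_comm 1 i, alt10_add_one]

lemma IsBinary.alt10_le (hs : IsBinary s) (i : ℕ) :
    (-1) ^ (i + 1) * alt10 i ≤ (-1) ^ (i + 1) * s i := by
  rcases Nat.even_or_odd i with hi | hi
  · rw [alt10_of_even hi, hi.add_one.neg_one_pow]; linarith [hs.le_one i]
  · rw [alt10_of_odd hi, hi.add_one.neg_one_pow]; linarith [hs.nonneg i]

lemma IsBinary.le_one_sub_alt10 (hs : IsBinary s) (i : ℕ) :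
    (-1) ^ (i + 1) * s i ≤ (-1) ^ (i + 1) * (1 - alt10 i) := by
  rcases Nat.even_or_odd i with hi | hi
  · rw [alt10_of_even hi, hi.add_one.neg_one_pow]; linarith [hs.nonneg i]
  · rw [alt10_of_odd hi, hi.add_one.neg_one_pow]; linarith [hs.le_one i]

lemma alt10_lt_one_sub_alt10 (i : ℕ) :
    (-1) ^ (i + 1) * alt10 i < (-1) ^ (i + 1) * (1 - alt10 i) := by
  rcases Nat.even_or_odd i with hi | hi
  · rw [alt10_of_even hi, hi.add_one.neg_one_pow]; norm_num
  · rw [alt10_of_odd hi, hi.add_one.neg_one_pow]; norm_num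

def NegativeShape (s : ℕ → ℝ) : Prop :=
  ∃ e, Even e ∧ (∀ i < e, s i = 0) ∧ s e = 1 ∧ shift (e + 1) s ≠ alt10

noncomputable def changeIndicator (s : ℕ → ℝ) (n : ℕ) : ℕ → ℝ :=
  fun i => if s (n + 1 + i) = s n then 0 else 1

lemma isBinary_changeIndicator (s : ℕ → ℝ) (n : ℕ) : IsBinary (changeIndicator s n) := fun i => by
  unfold changeIndicator; split_ifs <;> simp

lemma changeIndicator_of_eq_zero (hs : IsBinary s) {n : ℕ} (h : s n = 0) :
    changeIndicator s n = shift (n + 1) s := by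
  ext i; rcases hs (n + 1 + i) with h' | h' <;> simp [changeIndicator, h, h']

lemma changeIndicator_of_eq_one (hs : IsBinary s) {n : ℕ} (h : s n = 1) :
    changeIndicator s n = 1 - shift (n + 1) s := by
  ext i; rcases hs (n + 1 + i) with h' | h' <;> simp [changeIndicator, h, h']

lemma changeIndicator_eq_zero_iff {n i : ℕ} :
    changeIndicator s n i = 0 ↔ s (n + 1 + i) = s n := by
  unfold changeIndicator; split_ifs with h <;> simp [h]

lemma changeIndicator_eq_one_iff {n i : ℕ} :
    changeIndicator s n i = 1 ↔ s (n + 1 + i) ≠ s n := by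
  unfold changeIndicator; split_ifs with h <;> simp [h]

def ChangesAtAlt10 (s : ℕ → ℝ) : Prop := ∀ n, s n ≠ s (n + 1) → s n = alt10 n

end Alternating

namespace NegGoldenRatio

open scoped goldenRatio

lemma one_lt_abs_neg_goldenRatio : 1 < |-φ| := by
  rw [abs_neg, abs_of_pos goldenRatio_pos]; exact one_lt_goldenRatio

lemma inv_goldenRatio_sq : φ⁻¹ ^ 2 = 1 - φ⁻¹ := by
  rw [inv_goldenRatio, neg_sq, goldenConj_sq]; ring

lemma goldenRatio_eq_one_add_inv : φ = 1 + φ⁻¹ := by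
  rw [inv_goldenRatio, ← one_sub_goldenConj]; ring

lemma div_neg_goldenRatio_pow (x : ℝ) (i : ℕ) :
    x / (-φ) ^ (i + 1) = (-1) ^ (i + 1) * x / φ ^ (i + 1) := by
  rw [neg_pow, mul_comm, ← div_div, div_eq_mul_inv _ ((-1 : ℝ) ^ (i + 1)), ← inv_pow, inv_neg,
    inv_one]
  ring

variable {s w : ℕ → ℝ}

lemma value_eq (hs : IsBinary s) :
    expansionValue (-φ) s = -φ⁻¹ * (s 0 + expansionValue (-φ) (shift 1 s)) := by
  rw [expansionValue_eq one_lt_abs_neg_goldenRatio hs, inv_neg]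

lemma value_shift_eq (hs : IsBinary s) (n : ℕ) :
    expansionValue (-φ) (shift n s) =
      -φ⁻¹ * (s n + expansionValue (-φ) (shift (n + 1) s)) := by
  rw [value_eq (hs.shift n), shift_shift, shift_apply, Nat.add_zero]

lemma value_alt10 : expansionValue (-φ) alt10 = -1 := by
  have h₁ := value_eq isBinary_alt10
  have h₂ := value_eq isBinary_alt10.one_sub
  rw [shift_one_alt10] at h₁
  rw [shift_one_one_sub_alt10] at h₂
  simp only [alt10_zero, Pi.sub_apply, Pi.one_apply] at h₁ h₂
  have : φ⁻¹ * (expansionValue (-φ) alt10 + 1) = 0 := by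
    linear_combination h₁ - φ⁻¹ * h₂ + expansionValue (-φ) alt10 * inv_goldenRatio_sq
  linarith [(mul_eq_zero.1 this).resolve_left (inv_ne_zero goldenRatio_ne_zero)]

lemma value_one_sub_alt10 : expansionValue (-φ) (1 - alt10) = φ⁻¹ := by
  rw [value_eq isBinary_alt10.one_sub, shift_one_one_sub_alt10, value_alt10]
  simp [alt10_zero]

lemma value_one : expansionValue (-φ) 1 = φ⁻¹ - 1 := by
  have h := value_eq (s := 1) fun _ => Or.inr rfl
  rw [show shift 1 (1 : ℕ → ℝ) = 1 from rfl, Pi.one_apply] at h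
  have : (1 + φ⁻¹) * (expansionValue (-φ) 1 - (φ⁻¹ - 1)) = 0 := by
    linear_combination h - inv_goldenRatio_sq
  linarith [(mul_eq_zero.1 this).resolve_left (by positivity)]

lemma value_one_sub (hs : IsBinary s) :
    expansionValue (-φ) (1 - s) = φ⁻¹ - 1 - expansionValue (-φ) s := by
  rw [expansionValue_one_sub one_lt_abs_neg_goldenRatio hs, value_one]

lemma neg_one_le_value (hs : IsBinary s) : -1 ≤ expansionValue (-φ) s := by
  rw [← value_alt10]
  refine (isBinary_alt10.summable one_lt_abs_neg_goldenRatio).tsum_le_tsum (fun i => ?_)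
    (hs.summable one_lt_abs_neg_goldenRatio)
  rw [div_neg_goldenRatio_pow, div_neg_goldenRatio_pow]
  exact div_le_div_of_nonneg_right (hs.alt10_le i) (by positivity)

lemma value_le_inv (hs : IsBinary s) : expansionValue (-φ) s ≤ φ⁻¹ := by
  rw [← value_one_sub_alt10]
  refine (hs.summable one_lt_abs_neg_goldenRatio).tsum_le_tsum (fun i => ?_)
    (isBinary_alt10.one_sub.summable one_lt_abs_neg_goldenRatio)
  rw [div_neg_goldenRatio_pow, div_neg_goldenRatio_pow]
  exact div_le_div_of_nonneg_right (hs.le_one_sub_alt10 i) (by positivity)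

lemma value_mem_Icc (hs : IsBinary s) : expansionValue (-φ) s ∈ Set.Icc (-1) φ⁻¹ :=
  ⟨neg_one_le_value hs, value_le_inv hs⟩

lemma head_eq_one_of_value_eq_neg_one (hs : IsBinary s) (h : expansionValue (-φ) s = -1) :
    s 0 = 1 ∧ expansionValue (-φ) (shift 1 s) = φ⁻¹ := by
  have hrec := value_eq hs
  have h₀ := hs.le_one 0
  have h₁ := value_le_inv (hs.shift 1)
  have hsum : φ⁻¹ * (1 + φ⁻¹ - s 0 - expansionValue (-φ) (shift 1 s)) = 0 := by
    linear_combination h - hrec + inv_goldenRatio_sq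
  have := (mul_eq_zero.1 hsum).resolve_left (inv_ne_zero goldenRatio_ne_zero)
  constructor <;> linarith

lemma head_eq_zero_of_value_eq_inv (hs : IsBinary s) (h : expansionValue (-φ) s = φ⁻¹) :
    s 0 = 0 ∧ expansionValue (-φ) (shift 1 s) = -1 := by
  have hrec := value_eq hs
  have h₀ := hs.nonneg 0
  have h₁ := neg_one_le_value (hs.shift 1)
  have hsum : φ⁻¹ * (1 + s 0 + expansionValue (-φ) (shift 1 s)) = 0 := by
    linear_combination hrec - h
  have := (mul_eq_zero.1 hsum).resolve_left (inv_ne_zero goldenRatio_ne_zero)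
  constructor <;> linarith

lemma eq_alt10_of_value_eq_neg_one (hs : IsBinary s) (h : expansionValue (-φ) s = -1) :
    s = alt10 := by
  suffices ∀ n, ∀ s, IsBinary s → (expansionValue (-φ) s = -1 → s n = alt10 n) ∧
      (expansionValue (-φ) s = φ⁻¹ → s n = 1 - alt10 n) from funext fun n => (this n s hs).1 h
  intro n
  induction n with
  | zero =>
    intro s hs
    exact ⟨fun h => by rw [(head_eq_one_of_value_eq_neg_one hs h).1, alt10_zero],
      fun h => by rw [(head_eq_zero_of_value_eq_inv hs h).1, alt10_zero]; norm_num⟩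
  | succ n ih =>
    intro s hs
    have ih' := ih (shift 1 s) (hs.shift 1)
    rw [shift_apply, Nat.add_comm] at ih'
    refine ⟨fun h => ?_, fun h => ?_⟩
    · rw [ih'.2 (head_eq_one_of_value_eq_neg_one hs h).2, alt10_add_one]
    · rw [ih'.1 (head_eq_zero_of_value_eq_inv hs h).2, alt10_add_one]; ring

noncomputable def digitOf (x : ℝ) : ℝ := if x ≤ 0 then 1 else 0

noncomputable def remainderOf (x : ℝ) : ℝ := -φ * x - digitOf x

noncomputable def expansionOf (x : ℝ) : ℕ → ℝ := fun n => digitOf (remainderOf^[n] x)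

lemma eq_digitOf_add_remainderOf (x : ℝ) : x = -φ⁻¹ * (digitOf x + remainderOf x) := by
  rw [remainderOf, add_sub_cancel]
  field_simp

lemma remainderOf_mem {x : ℝ} (hx : x ∈ Set.Icc (-1) φ⁻¹) : remainderOf x ∈ Set.Icc (-1) φ⁻¹ := by
  obtain ⟨hx₁, hx₂⟩ := hx
  have hφ := goldenRatio_eq_one_add_inv
  have hφu : φ * φ⁻¹ = 1 := mul_inv_cancel₀ goldenRatio_ne_zero
  have := goldenRatio_pos
  unfold remainderOf digitOf
  split_ifs with h <;> constructor <;> nlinarith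

lemma isBinary_expansionOf (x : ℝ) : IsBinary (expansionOf x) := fun n => by
  unfold expansionOf digitOf; split_ifs <;> simp

lemma expansionOf_zero (x : ℝ) : expansionOf x 0 = digitOf x := rfl

lemma shift_one_expansionOf (x : ℝ) : shift 1 (expansionOf x) = expansionOf (remainderOf x) := by
  ext n; rw [shift_apply, Nat.add_comm]; exact congrArg digitOf (Function.iterate_succ_apply _ n x)

lemma value_expansionOf {x : ℝ} (hx : x ∈ Set.Icc (-1) φ⁻¹) :
    expansionValue (-φ) (expansionOf x) = x := by
  have hu₀ : 0 < φ⁻¹ := inv_pos.2 goldenRatio_pos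
  have hu₁ : φ⁻¹ < 1 := inv_lt_one_of_one_lt₀ one_lt_goldenRatio
  -- the error `value - x` is multiplied by `-φ⁻¹` at each step and stays bounded
  have bound : ∀ n, ∀ y ∈ Set.Icc (-1) φ⁻¹,
      |expansionValue (-φ) (expansionOf y) - y| ≤ 2 * φ⁻¹ ^ n := by
    intro n
    induction n with
    | zero =>
      intro y ⟨hy₁, hy₂⟩
      have := value_mem_Icc (isBinary_expansionOf y)
      rw [abs_sub_le_iff]; constructor <;> linarith [this.1, this.2]
    | succ n ih =>
      intro y hy
      have step : expansionValue (-φ) (expansionOf y) - y =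
          -φ⁻¹ * (expansionValue (-φ) (expansionOf (remainderOf y)) - remainderOf y) := by
        have h := value_eq (isBinary_expansionOf y)
        rw [shift_one_expansionOf, expansionOf_zero] at h
        linear_combination h - eq_digitOf_add_remainderOf y
      rw [step, abs_mul, abs_neg, abs_of_pos hu₀, pow_succ]
      nlinarith [ih _ (remainderOf_mem hy)]
  have hlim : Filter.Tendsto (fun n => 2 * φ⁻¹ ^ n) atTop (nhds 0) := by
    simpa using (tendsto_pow_atTop_nhds_zero_of_lt_one hu₀.le hu₁).const_mul 2
  have := ge_of_tendsto' hlim fun n => bound n x hx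
  exact sub_eq_zero.1 (abs_nonpos_iff.1 this)

theorem exists_isBinary_value_eq_iff {x : ℝ} :
    (∃ r, IsBinary r ∧ expansionValue (-φ) r = x) ↔ x ∈ Set.Icc (-1) φ⁻¹ := by
  constructor
  · rintro ⟨r, hr, rfl⟩; exact value_mem_Icc hr
  · intro hx; exact ⟨expansionOf x, isBinary_expansionOf x, value_expansionOf hx⟩

theorem value_neg_iff (hs : IsBinary s) : expansionValue (-φ) s < 0 ↔ NegativeShape s := by
  have hu : 0 < φ⁻¹ := inv_pos.2 goldenRatio_pos
  constructor
  · intro hneg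
    have hex : ∃ i, s i = 1 := by
      by_contra! h
      rw [funext fun i => (hs i).resolve_right (h i), ← Pi.zero_def, expansionValue_zero] at hneg
      exact lt_irrefl _ hneg
    classical
    obtain ⟨e, hone, hzero⟩ : ∃ e, s e = 1 ∧ ∀ i < e, s i = 0 :=
      ⟨Nat.find hex, Nat.find_spec hex, fun i hi => (hs i).resolve_right (Nat.find_min hex hi)⟩
    have hval := expansionValue_eq_div_of_forall_lt_eq_zero one_lt_abs_neg_goldenRatio hs hzero
    have hhead := value_shift_eq hs e
    rw [hone] at hhead
    have htail := neg_one_le_value (hs.shift (e + 1))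
    have heven : Even e := by
      by_contra hodd
      rw [Nat.not_even_iff_odd] at hodd
      have hnonpos : expansionValue (-φ) (shift e s) ≤ 0 := by rw [hhead]; nlinarith
      rw [hodd.neg_pow, div_neg] at hval
      have := div_nonpos_of_nonpos_of_nonneg hnonpos (pow_pos goldenRatio_pos e).le
      linarith
    refine ⟨e, heven, hzero, hone, fun halt => ?_⟩
    rw [halt, value_alt10, add_neg_cancel, mul_zero] at hhead
    rw [hval, hhead, zero_div] at hneg
    exact lt_irrefl _ hneg
  · rintro ⟨e, heven, hzero, hone, hne⟩
    have htail : -1 < expansionValue (-φ) (shift (e + 1) s) :=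
      (neg_one_le_value (hs.shift _)).lt_of_ne
        fun h => hne (eq_alt10_of_value_eq_neg_one (hs.shift _) h.symm)
    rw [expansionValue_eq_div_of_forall_lt_eq_zero one_lt_abs_neg_goldenRatio hs hzero,
      value_shift_eq hs e, hone, heven.neg_pow]
    exact div_neg_of_neg_of_pos (by nlinarith) (pow_pos goldenRatio_pos e)

def IsGreedy (s : ℕ → ℝ) : Prop :=
  ∀ w, IsBinary w → expansionValue (-φ) w = expansionValue (-φ) s → w = s ∨ AltLt w s

lemma isGreedy_iff_forall_not_exists (hs : IsBinary s) :
    IsGreedy s ↔ ∀ n, s n = alt10 n → ¬ ∃ r, IsBinary r ∧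
      expansionValue (-φ) (shift n s) = -φ⁻¹ * (1 - alt10 n + expansionValue (-φ) r) := by
  constructor
  · rintro hg n hn ⟨r, hr, hv⟩
    classical
    set w : ℕ → ℝ := fun i => if i < n then s i else if i = n then 1 - alt10 n else r (i - (n + 1))
    have hw : IsBinary w := fun i => by
      simp only [w]; split_ifs
      exacts [hs i, isBinary_alt10.one_sub n, hr _]
    have hagree : ∀ i < n, s i = w i := fun i hi => by simp [w, hi]
    have hwn : w n = 1 - alt10 n := by simp [w]
    have htail : shift (n + 1) w = r := by
      ext i; simp only [shift_apply, w]; rw [if_neg (by omega), if_neg (by omega)]; congr 1; omega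
    have hvw : expansionValue (-φ) w = expansionValue (-φ) s := by
      rw [eq_comm, expansionValue_eq_iff_of_eqOn one_lt_abs_neg_goldenRatio hs hw hagree, hv,
        value_shift_eq hw, hwn, htail]
    have hne : w n ≠ s n := by
      rw [hwn, hn]; rcases isBinary_alt10 n with h | h <;> rw [h] <;> norm_num
    rcases hg w hw hvw with heq | ⟨k, hk, hlt⟩
    · exact hne (congrFun heq n)
    · rcases lt_trichotomy k n with hkn | rfl | hkn
      · rw [← hagree k hkn] at hlt; exact lt_irrefl _ hlt
      · rw [hwn, hn] at hlt; exact (alt10_lt_one_sub_alt10 k).not_gt hlt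
      · exact hne (hk n hkn)
  · intro h w hw hvw
    by_cases heq : w = s
    · exact Or.inl heq
    right
    classical
    have hex : ∃ k, w k ≠ s k := Function.ne_iff.1 heq
    set k := Nat.find hex
    have hagree : ∀ i < k, w i = s i := fun i hi => not_not.1 (Nat.find_min hex hi)
    have hk : w k ≠ s k := Nat.find_spec hex
    have htail := (expansionValue_eq_iff_of_eqOn one_lt_abs_neg_goldenRatio hw hs hagree).1 hvw
    refine ⟨k, hagree, ?_⟩
    by_cases hsk : s k = alt10 k
    · refine absurd ⟨shift (k + 1) w, hw.shift _, ?_⟩ (h k hsk)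
      rw [← htail, value_shift_eq hw, hs.eq_one_sub_of_ne hw hk.symm, hsk]
    · rw [hs.eq_one_sub_of_ne hw hk.symm, isBinary_alt10.eq_one_sub_of_ne hs (Ne.symm hsk),
        sub_sub_cancel]
      exact alt10_lt_one_sub_alt10 k

/- For even `n` the condition reads `φ⁻¹ - 1 < v (σⁿ⁺¹ s)`, for odd `n` it reads
`v (σⁿ⁺¹ s) < 0`; as `changeIndicator s n` is `1 - σⁿ⁺¹ s`, resp. `σⁿ⁺¹ s`, both become one sign
condition. -/
theorem isGreedy_iff (hs : IsBinary s) :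
    IsGreedy s ↔ ∀ n, s n = alt10 n → expansionValue (-φ) (changeIndicator s n) < 0 := by
  rw [isGreedy_iff_forall_not_exists hs]
  refine forall_congr' fun n => imp_congr_right fun hn => ?_
  have hy := value_mem_Icc (hs.shift (n + 1))
  set y := expansionValue (-φ) (shift (n + 1) s)
  have key : (∃ r, IsBinary r ∧ expansionValue (-φ) (shift n s) =
      -φ⁻¹ * (1 - alt10 n + expansionValue (-φ) r)) ↔ 2 * alt10 n - 1 + y ∈ Set.Icc (-1) φ⁻¹ := by
    rw [← exists_isBinary_value_eq_iff]
    refine exists_congr fun r => and_congr_right fun _ => ?_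
    rw [value_shift_eq hs, hn, mul_right_inj' (neg_ne_zero.2 (inv_ne_zero goldenRatio_ne_zero))]
    constructor <;> intro h <;> linarith
  rw [key, Set.mem_Icc]
  rcases Nat.even_or_odd n with hn' | hn'
  · rw [alt10_of_even hn'] at hn ⊢
    rw [changeIndicator_of_eq_one hs hn, value_one_sub (hs.shift _)]
    constructor
    · intro h; by_contra h'; exact h ⟨by linarith [hy.1], by linarith⟩
    · rintro h ⟨-, h'⟩; linarith
  · rw [alt10_of_odd hn'] at hn ⊢
    rw [changeIndicator_of_eq_zero hs hn]
    constructor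
    · intro h; by_contra h'; exact h ⟨by linarith, by linarith [hy.2]⟩
    · rintro h ⟨h', -⟩; linarith

end NegGoldenRatio

section Combinatorics

variable {s : ℕ → ℝ}

lemma eq_of_forall_lt_eq_succ {a m : ℕ} (h : ∀ j < m, s (a + j) = s (a + j + 1)) :
    ∀ i ≤ m, s (a + i) = s a := by
  intro i hi
  induction i with
  | zero => rfl
  | succ i ih => rw [← Nat.add_assoc, ← h i hi, ih (by omega)]

lemma exists_run_of_negativeShape (hs : IsBinary s) {n : ℕ} (hn : s n = alt10 n)
    (h : NegativeShape (changeIndicator s n)) :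
    ∃ e, Even e ∧ (∀ i ≤ e, s (n + i) = s n) ∧ s (n + e + 1) ≠ s n ∧
      s (n + e + 1) = alt10 (n + e + 1) := by
  obtain ⟨e, he, hzero, hone, -⟩ := h
  have hchange : s (n + e + 1) ≠ s n := by
    rw [Nat.add_right_comm]; exact changeIndicator_eq_one_iff.1 hone
  refine ⟨e, he, fun i hi => ?_, hchange, ?_⟩
  · rcases i with _ | i
    · rfl
    · rw [← Nat.add_assoc, Nat.add_right_comm]
      exact changeIndicator_eq_zero_iff.1 (hzero i (by omega))
  · rw [hs.eq_one_sub_of_ne hs hchange.symm, alt10_add_one, (alt10_add_eq_iff n e).2 he, hn]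

lemma changesAtAlt10_of_negativeShape (hs : IsBinary s)
    (hgood : ∀ n, s n = alt10 n → NegativeShape (changeIndicator s n)) {p : ℕ}
    (hp : s p = alt10 p) (hbelow : ∀ n < p, s n ≠ s (n + 1) → s n = alt10 n) :
    ChangesAtAlt10 s := by
  intro N hN
  rcases lt_or_ge N p with hNp | hpN
  · exact hbelow N hNp hN
  classical
  set m := Nat.findGreatest (fun k => s k = alt10 k) N
  have hm : s m = alt10 m := Nat.findGreatest_spec (P := fun k => s k = alt10 k) hpN hp
  have hmN : m ≤ N := Nat.findGreatest_le N
  obtain ⟨e, he, hrun, -, hnext⟩ := exists_run_of_negativeShape hs hm (hgood m hm)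
  -- `m` is the last agreement with `1010…` up to `N`, so the change point `N` must be the end
  -- `m + e` of the run starting at `m`
  rcases lt_trichotomy N (m + e) with hlt | heq | hgt
  · have h₁ := hrun (N - m) (by omega)
    have h₂ := hrun (N + 1 - m) (by omega)
    rw [Nat.add_sub_cancel' hmN] at h₁
    rw [show m + (N + 1 - m) = N + 1 by omega] at h₂
    exact absurd (h₁.trans h₂.symm) hN
  · rw [heq, hrun e le_rfl, hm, (alt10_add_eq_iff m e).2 he]
  · exact absurd hnext (Nat.findGreatest_is_greatest (P := fun k => s k = alt10 k)
      (n := N) (k := m + e + 1) (by omega) (by omega))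

lemma frequently_ne_of_negativeShape (hs : IsBinary s)
    (hgood : ∀ n, s n = alt10 n → NegativeShape (changeIndicator s n)) {p : ℕ}
    (hp : s p = alt10 p) : ∃ᶠ n in atTop, s n ≠ s (n + 1) := by
  have hagree : ∀ N, ∃ n ≥ N, s n = alt10 n := by
    intro N
    induction N with
    | zero => exact ⟨p, Nat.zero_le p, hp⟩
    | succ N ih =>
      obtain ⟨n, hn, hA⟩ := ih
      obtain ⟨e, -, -, -, hnext⟩ := exists_run_of_negativeShape hs hA (hgood n hA)
      exact ⟨n + e + 1, by omega, hnext⟩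
  rw [frequently_atTop]
  intro N
  obtain ⟨n, hn, hA⟩ := hagree N
  obtain ⟨e, -, hrun, hchange, -⟩ := exists_run_of_negativeShape hs hA (hgood n hA)
  exact ⟨n + e, by omega, by rw [hrun e le_rfl]; exact hchange.symm⟩

lemma negativeShape_changeIndicator (hagree : ChangesAtAlt10 s)
    (hfreq : ∃ᶠ n in atTop, s n ≠ s (n + 1)) {n : ℕ} (hn : s n = alt10 n) :
    NegativeShape (changeIndicator s n) := by
  classical
  have hex : ∃ e, s (n + e) ≠ s (n + e + 1) := by
    obtain ⟨b, hb, hne⟩ := frequently_atTop.1 hfreq n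
    exact ⟨b - n, by rwa [Nat.add_sub_cancel' hb]⟩
  obtain ⟨e, hend, hmin⟩ : ∃ e, s (n + e) ≠ s (n + e + 1) ∧ ∀ j < e, s (n + j) = s (n + j + 1) :=
    ⟨Nat.find hex, Nat.find_spec hex, fun j hj => not_not.1 (Nat.find_min hex hj)⟩
  have hrun := eq_of_forall_lt_eq_succ hmin
  have he : Even e := by
    rw [← alt10_add_eq_iff n, ← hagree _ hend, hrun _ le_rfl, hn]
  refine ⟨e, he, fun i hi => ?_, ?_, fun htail => ?_⟩
  · rw [changeIndicator_eq_zero_iff, Nat.add_assoc, Nat.add_comm 1, hrun _ hi]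
  · rw [changeIndicator_eq_one_iff, ← hrun _ le_rfl, Nat.add_right_comm]
    exact hend.symm
  · have h₁ : s (n + (e + 2)) ≠ s n := by
      have := changeIndicator_eq_one_iff.1 ((congrFun htail 0).trans (alt10_of_even Even.zero))
      rwa [show n + 1 + (e + 1 + 0) = n + (e + 2) by omega] at this
    have h₂ : s (n + (e + 2) + 1) = s n := by
      have := changeIndicator_eq_zero_iff.1 ((congrFun htail 1).trans (alt10_of_odd odd_one))
      rwa [show n + 1 + (e + 1 + 1) = n + (e + 2) + 1 by omega] at this
    have hk := hagree (n + (e + 2)) (by rw [h₂]; exact h₁)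
    rw [(alt10_add_eq_iff n _).2 (he.add even_two), ← hn] at hk
    exact h₁ hk

lemma negativeShape_of_changesAtAlt10 (hs : IsBinary s) (hagree : ChangesAtAlt10 s)
    (hfreq : ∃ᶠ n in atTop, s n ≠ s (n + 1)) : NegativeShape s := by
  classical
  have hex : ∃ i, s i = 1 := by
    by_contra! h
    obtain ⟨b, -, hb⟩ := frequently_atTop.1 hfreq 0
    exact hb (by rw [(hs b).resolve_right (h b), (hs (b + 1)).resolve_right (h (b + 1))])
  obtain ⟨e, hone, hzero⟩ : ∃ e, s e = 1 ∧ ∀ i < e, s i = 0 :=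
    ⟨Nat.find hex, Nat.find_spec hex, fun i hi => (hs i).resolve_right (Nat.find_min hex hi)⟩
  have he : Even e := by
    rcases e with _ | m
    · exact Even.zero
    have hm := hagree m (by rw [hzero m (by omega), hone]; norm_num)
    rcases Nat.even_or_odd m with h | h
    · rw [hzero m (by omega), alt10_of_even h] at hm; norm_num at hm
    · exact h.add_one
  refine ⟨e, he, hzero, hone, fun htail => ?_⟩
  have h₁ : s (e + 1) = 1 := (congrFun htail 0).trans (alt10_of_even Even.zero)
  have h₂ : s (e + 1 + 1) = 0 := (congrFun htail 1).trans (alt10_of_odd odd_one)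
  have := hagree (e + 1) (by rw [h₁, h₂]; norm_num)
  rw [h₁, alt10_of_odd he.add_one] at this
  norm_num at this

theorem negativeShape_and_forall_iff (hs : IsBinary s) :
    NegativeShape s ∧ (∀ n, s n = alt10 n → NegativeShape (changeIndicator s n)) ↔
      ChangesAtAlt10 s ∧ ∃ᶠ n in atTop, s n ≠ s (n + 1) := by
  constructor
  · rintro ⟨⟨e, he, hzero, hone, -⟩, hgood⟩
    have hp : s e = alt10 e := by rw [hone, alt10_of_even he]
    refine ⟨changesAtAlt10_of_negativeShape hs hgood hp fun n hn hchange => ?_,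
      frequently_ne_of_negativeShape hs hgood hp⟩
    -- below `e` the only change is `0 → 1` at `e - 1`
    have hn₁ : n + 1 = e := by
      by_contra h
      exact hchange (by rw [hzero n hn, hzero (n + 1) (by omega)])
    rw [hzero n hn, alt10_of_odd (Nat.not_even_iff_odd.1 fun h => ?_)]
    rw [← hn₁] at he
    exact Nat.not_even_iff_odd.2 h.add_one he
  · rintro ⟨hagree, hfreq⟩
    exact ⟨negativeShape_of_changesAtAlt10 hs hagree hfreq,
      fun n hn => negativeShape_changeIndicator hagree hfreq hn⟩

lemma ChangesAtAlt10.eq_of_change_of_change (h : ChangesAtAlt10 s) {i k : ℕ}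
    (h₁ : s i ≠ s (i + 1)) (h₂ : s (i + 2 * k) ≠ s (i + 2 * k + 1)) : s (i + 2 * k) = s i := by
  rw [h _ h₁, h _ h₂, alt10_add_eq_iff]; exact even_two_mul k

lemma eq_alt10_of_first_change (hs : IsBinary s)
    (h₁ : ¬ ∃ k : ℕ, 1 ≤ k ∧ (∀ i < 2 * k, s i = 1) ∧ s (2 * k) = 0)
    (h₂ : ¬ ∃ k : ℕ, 1 ≤ k ∧ (∀ i < 2 * k - 1, s i = 0) ∧ s (2 * k - 1) = 1)
    {N : ℕ} (hconst : ∀ i ≤ N, s i = s 0) (hN : s N ≠ s (N + 1)) : s N = alt10 N := by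
  have hnext := hs.eq_one_sub_of_ne hs hN
  rw [hconst N le_rfl] at hnext ⊢
  rcases hs 0 with h0 | h0 <;> rw [h0] at hnext ⊢ <;> norm_num at hnext <;>
    obtain ⟨k, rfl | rfl⟩ := Nat.even_or_odd' N
  · exact absurd ⟨k + 1, by omega, fun i hi => by rw [hconst i (by omega), h0],
      by rwa [show 2 * (k + 1) - 1 = 2 * k + 1 by omega]⟩ h₂
  · rw [alt10_of_odd (odd_two_mul_add_one k)]
  · rw [alt10_of_even (even_two_mul k)]
  · exact absurd ⟨k + 1, by omega, fun i hi => by rw [hconst i (by omega), h0],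
      by rwa [show 2 * (k + 1) = 2 * k + 1 + 1 by omega]⟩ h₁

lemma eq_alt10_of_next_change (hs : IsBinary s)
    (h₁ : ¬ ∃ i k : ℕ, 1 ≤ k ∧ s i = 1 ∧ (∀ j, 1 ≤ j → j ≤ 2 * k → s (i + j) = 0) ∧
      s (i + 2 * k + 1) = 1)
    (h₂ : ¬ ∃ i k : ℕ, 1 ≤ k ∧ s i = 0 ∧ (∀ j, 1 ≤ j → j ≤ 2 * k → s (i + j) = 1) ∧
      s (i + 2 * k + 1) = 0)
    {M L : ℕ} (hM : s M = alt10 M) (hchange : s M ≠ s (M + 1))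
    (hrun : ∀ i ≤ L, s (M + 1 + i) = s (M + 1)) (hend : s (M + 1 + L) ≠ s (M + 1 + L + 1)) :
    s (M + 1 + L) = alt10 (M + 1 + L) := by
  have hafter := hs.eq_one_sub_of_ne hs hchange
  have hlast := hs.eq_one_sub_of_ne hs hend
  rw [hrun L le_rfl, hafter, sub_sub_cancel] at hlast
  rcases Nat.even_or_odd L with hL | ⟨k, rfl⟩
  · have hodd : Odd (1 + L) := by rw [Nat.add_comm]; exact hL.add_one
    rw [hrun L le_rfl, hafter, Nat.add_assoc, alt10_add_of_odd M hodd, hM]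
  · -- the run `s (M + 1), …, s (M + 2k + 2)` between two changes has even length
    have hrun' : ∀ j, 1 ≤ j → j ≤ 2 * (k + 1) → s (M + j) = 1 - s M := fun j hj hj' => by
      rw [← hafter, show M + j = M + 1 + (j - 1) by omega, hrun _ (by omega)]
    have hlast' : s (M + 2 * (k + 1) + 1) = s M := by
      rw [← hlast]; congr 1; omega
    rcases hs M with h0 | h0 <;> rw [h0] at hrun' hlast' <;> norm_num at hrun'
    · exact (h₂ ⟨M, k + 1, by omega, h0, hrun', hlast'⟩).elim
    · exact (h₁ ⟨M, k + 1, by omega, h0, hrun', hlast'⟩).elim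

lemma changesAtAlt10_of_not_exists (hs : IsBinary s)
    (hpre₁ : ¬ ∃ k : ℕ, 1 ≤ k ∧ (∀ i < 2 * k, s i = 1) ∧ s (2 * k) = 0)
    (hpre₂ : ¬ ∃ k : ℕ, 1 ≤ k ∧ (∀ i < 2 * k - 1, s i = 0) ∧ s (2 * k - 1) = 1)
    (hfac₁ : ¬ ∃ i k : ℕ, 1 ≤ k ∧ s i = 1 ∧ (∀ j, 1 ≤ j → j ≤ 2 * k → s (i + j) = 0) ∧
      s (i + 2 * k + 1) = 1)
    (hfac₂ : ¬ ∃ i k : ℕ, 1 ≤ k ∧ s i = 0 ∧ (∀ j, 1 ≤ j → j ≤ 2 * k → s (i + j) = 1) ∧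
      s (i + 2 * k + 1) = 0) :
    ChangesAtAlt10 s := by
  intro N
  induction N using Nat.strong_induction_on with
  | _ N ih =>
  intro hN
  classical
  by_cases hprev : ∃ M < N, s M ≠ s (M + 1)
  · -- `M` is the previous change point
    obtain ⟨M₀, hM₀, hchange₀⟩ := hprev
    set M := Nat.findGreatest (fun M => s M ≠ s (M + 1)) (N - 1)
    have hM : s M ≠ s (M + 1) :=
      Nat.findGreatest_spec (P := fun M => s M ≠ s (M + 1)) (by omega) hchange₀
    have hMN : M < N := by
      have := Nat.findGreatest_le (P := fun M => s M ≠ s (M + 1)) (N - 1); omega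
    have hrun := eq_of_forall_lt_eq_succ (a := M + 1) (m := N - M - 1) fun j hj =>
      not_not.1 (Nat.findGreatest_is_greatest (P := fun M => s M ≠ s (M + 1)) (n := N - 1)
        (by omega) (by omega))
    have := eq_alt10_of_next_change hs hfac₁ hfac₂ (ih M hMN hM) hM hrun
      (by rwa [show M + 1 + (N - M - 1) = N by omega])
    rwa [show M + 1 + (N - M - 1) = N by omega] at this
  · push Not at hprev
    have hconst := eq_of_forall_lt_eq_succ (a := 0) (m := N) fun j hj => by
      simpa using hprev j hj
    exact eq_alt10_of_first_change hs hpre₁ hpre₂ (by simpa using hconst) hN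

theorem changesAtAlt10_iff (hs : IsBinary s) :
    ChangesAtAlt10 s ↔
      (¬ ∃ k : ℕ, 1 ≤ k ∧ (∀ i < 2 * k, s i = 1) ∧ s (2 * k) = 0) ∧
      (¬ ∃ k : ℕ, 1 ≤ k ∧ (∀ i < 2 * k - 1, s i = 0) ∧ s (2 * k - 1) = 1) ∧
      (¬ ∃ i k : ℕ, 1 ≤ k ∧ s i = 1 ∧ (∀ j, 1 ≤ j → j ≤ 2 * k → s (i + j) = 0) ∧
        s (i + 2 * k + 1) = 1) ∧
      (¬ ∃ i k : ℕ, 1 ≤ k ∧ s i = 0 ∧ (∀ j, 1 ≤ j → j ≤ 2 * k → s (i + j) = 1) ∧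
        s (i + 2 * k + 1) = 0) := by
  constructor
  · intro h
    refine ⟨?_, ?_, ?_, ?_⟩
    · rintro ⟨k, hk, hones, hzero⟩
      have hodd : Odd (2 * k - 1) := ⟨k - 1, by omega⟩
      have := h (2 * k - 1) (by
        rw [hones _ (by omega), Nat.sub_add_cancel (by omega), hzero]; norm_num)
      rw [hones _ (by omega), alt10_of_odd hodd] at this
      norm_num at this
    · rintro ⟨k, hk, hzeros, hone⟩
      have heven : Even (2 * k - 2) := ⟨k - 1, by omega⟩
      have := h (2 * k - 2) (by
        rw [hzeros _ (by omega), show 2 * k - 2 + 1 = 2 * k - 1 by omega, hone]; norm_num)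
      rw [hzeros _ (by omega), alt10_of_even heven] at this
      norm_num at this
    · rintro ⟨i, k, hk, hone, hzeros, hone'⟩
      have := h.eq_of_change_of_change (k := k) (by rw [hone, hzeros 1 le_rfl (by omega)]; norm_num)
        (by rw [hzeros _ (by omega) le_rfl, hone']; norm_num)
      rw [hzeros _ (by omega) le_rfl, hone] at this
      norm_num at this
    · rintro ⟨i, k, hk, hzero, hones, hzero'⟩
      have := h.eq_of_change_of_change (k := k) (by rw [hzero, hones 1 le_rfl (by omega)]; norm_num)
        (by rw [hones _ (by omega) le_rfl, hzero']; norm_num)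
      rw [hones _ (by omega) le_rfl, hzero] at this
      norm_num at this
  · rintro ⟨hpre₁, hpre₂, hfac₁, hfac₂⟩
    exact changesAtAlt10_of_not_exists hs hpre₁ hpre₂ hfac₁ hfac₂

theorem frequently_ne_succ_iff (hs : IsBinary s) :
    (∃ᶠ n in atTop, s n ≠ s (n + 1)) ↔
      (¬ ∃ N : ℕ, ∀ i ≥ N, s i = 0) ∧ (¬ ∃ N : ℕ, ∀ i ≥ N, s i = 1) := by
  rw [frequently_atTop]
  constructor
  · intro h
    constructor <;> rintro ⟨N, hN⟩ <;> obtain ⟨b, hb, hne⟩ := h N <;>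
      exact hne (by rw [hN b hb, hN (b + 1) (by omega)])
  · rintro ⟨h₀, h₁⟩ N
    by_contra! h
    have hconst : ∀ i ≥ N, s i = s N := fun i hi => by
      simpa [Nat.add_sub_cancel' hi] using
        eq_of_forall_lt_eq_succ (a := N) (m := i - N) (fun j _ => h (N + j) (by omega)) _ le_rfl
    rcases hs N with h' | h'
    · exact h₀ ⟨N, fun i hi => (hconst i hi).trans h'⟩
    · exact h₁ ⟨N, fun i hi => (hconst i hi).trans h'⟩

end Combinatorics

namespace NegGoldenRatio

open scoped goldenRatio

variable {s : ℕ → ℝ}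

theorem isGreedy_and_value_neg_iff (hs : IsBinary s) :
    IsGreedy s ∧ expansionValue (-φ) s < 0 ↔
      ChangesAtAlt10 s ∧ ∃ᶠ n in atTop, s n ≠ s (n + 1) := by
  rw [isGreedy_iff hs, value_neg_iff hs, and_comm, ← negativeShape_and_forall_iff hs]
  exact and_congr_right' <| forall₂_congr fun n _ => value_neg_iff (isBinary_changeIndicator s n)

end NegGoldenRatio

theorem stmt16 (φ : ℝ) (hφ : φ = (1 + Real.sqrt 5) / 2)
    (s : ℕ → ℝ) (hs : ∀ i, s i = 0 ∨ s i = 1) :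
    (∃ x ∈ Set.Ico (-1 : ℝ) 0,
        ((∀ i, s i = 0 ∨ s i = 1) ∧ x = ∑' i : ℕ, s i / (-φ) ^ (i + 1)) ∧
        ∀ w : ℕ → ℝ,
          ((∀ i, w i = 0 ∨ w i = 1) ∧ x = ∑' i : ℕ, w i / (-φ) ^ (i + 1)) →
            w = s ∨ AltLt w s) ↔
      -- (i) no prefix 1^{2k}0 nor 0^{2k-1}1, k ≥ 1
      ((¬ ∃ k : ℕ, 1 ≤ k ∧ (∀ i < 2 * k, s i = 1) ∧ s (2 * k) = 0) ∧
        (¬ ∃ k : ℕ, 1 ≤ k ∧ (∀ i < 2 * k - 1, s i = 0) ∧ s (2 * k - 1) = 1) ∧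
        -- (ii) no suffix 0^ω nor 1^ω
        (¬ ∃ N : ℕ, ∀ i ≥ N, s i = 0) ∧
        (¬ ∃ N : ℕ, ∀ i ≥ N, s i = 1) ∧
        -- (iii) no factor 10^{2k}1 nor 01^{2k}0, k ≥ 1
        (¬ ∃ i k : ℕ, 1 ≤ k ∧ s i = 1 ∧ (∀ j, 1 ≤ j → j ≤ 2 * k → s (i + j) = 0) ∧
          s (i + 2 * k + 1) = 1) ∧
        (¬ ∃ i k : ℕ, 1 ≤ k ∧ s i = 0 ∧ (∀ j, 1 ≤ j → j ≤ 2 * k → s (i + j) = 1) ∧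
          s (i + 2 * k + 1) = 0)) := by
  subst hφ
  refine Iff.trans ?_ <| (NegGoldenRatio.isGreedy_and_value_neg_iff hs).trans <|
    ((changesAtAlt10_iff hs).and (frequently_ne_succ_iff hs)).trans (by tauto)
  constructor
  · rintro ⟨x, ⟨-, hx⟩, ⟨-, rfl⟩, hmax⟩
    exact ⟨fun w hw hv => hmax w ⟨hw, hv.symm⟩, hx⟩
  · rintro ⟨hgreedy, hneg⟩
    exact ⟨_, ⟨NegGoldenRatio.neg_one_le_value hs, hneg⟩, ⟨hs, rfl⟩,
      fun w ⟨hw, hv⟩ => hgreedy w hw hv.symm⟩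
end

section
/- Let β > 1 + √3 with β ∉ ℕ and 𝒜 = {0,1,…,⌊β⌋}. Then the set {x ∈ J_{−β,𝒜} : R_{−β,𝒜}(x) is a singleton} of numbers having a unique (−β)-representation over 𝒜 is uncountable. -/
/-!
Replacing every digit `t i` at an odd position by `⌊β⌋ - t i` turns `(-β)`-expansions over
`{0, …, ⌊β⌋}` into `β`-expansions over the same alphabet, up to an additive constant. So it
suffices to exhibit uncountably many `β`-expansions that no other expansion over `{0, …, ⌊β⌋}`
can match. Sequences with digits `1, 2` and no two consecutive `2`s do: each of their tails has
value in `[1 / (β - 1), (2 * β + 1) / (β ^ 2 - 1)]`, and the upper end is below `1` exactly when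
`β > 1 + √3`, while tails over `{0, …, ⌊β⌋}` have value in `[0, ⌊β⌋ / (β - 1)]` with `⌊β⌋ < β`.
So the tails of two such expansions differ by less than `1` and cannot compensate a first
differing digit. Placing the `2`s freely at even positions gives continuum many such sequences.
-/

open Set

section PowerSeries

variable {x : ℝ}

lemma summable_mul_pow_succ (hx0 : 0 ≤ x) (hx1 : x < 1) {d : ℕ → ℝ} {C : ℝ}
    (hd : ∀ i, |d i| ≤ C) : Summable fun i => d i * x ^ (i + 1) := by
  refine .of_norm_bounded ((summable_geometric_of_lt_one hx0 hx1).mul_left (C * x)) fun i => ?_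
  rw [Real.norm_eq_abs, abs_mul, abs_of_nonneg (pow_nonneg hx0 _), pow_succ', ← mul_assoc]
  gcongr
  exact hd i

lemma tsum_pow_succ (hx0 : 0 ≤ x) (hx1 : x < 1) : ∑' i : ℕ, x ^ (i + 1) = x / (1 - x) := by
  simp_rw [pow_succ']
  rw [tsum_mul_left, tsum_geometric_of_lt_one hx0 hx1, div_eq_mul_inv]

lemma tsum_mul_pow_succ_mem_Icc (hx0 : 0 ≤ x) (hx1 : x < 1) {d : ℕ → ℝ} {a b : ℝ}
    (hd : ∀ i, d i ∈ Icc a b) :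
    ∑' i, d i * x ^ (i + 1) ∈ Icc (a * (x / (1 - x))) (b * (x / (1 - x))) := by
  have hgeo : Summable fun i : ℕ => x ^ (i + 1) :=
    (summable_nat_add_iff 1).mpr (summable_geometric_of_lt_one hx0 hx1)
  have hs : Summable fun i => d i * x ^ (i + 1) :=
    summable_mul_pow_succ hx0 hx1 (C := |a| + |b|) fun i => abs_le.mpr
      ⟨by linarith [neg_abs_le a, abs_nonneg b, (hd i).1],
        by linarith [le_abs_self b, abs_nonneg a, (hd i).2]⟩
  rw [← tsum_pow_succ hx0 hx1, ← tsum_mul_left, ← tsum_mul_left]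
  exact ⟨(hgeo.mul_left a).tsum_le_tsum
      (fun i => mul_le_mul_of_nonneg_right (hd i).1 (by positivity)) hs,
    hs.tsum_le_tsum (fun i => mul_le_mul_of_nonneg_right (hd i).2 (by positivity))
      (hgeo.mul_left b)⟩

lemma tsum_mul_pow_succ_eq_mul_add {d : ℕ → ℝ} (hs : Summable fun i => d i * x ^ (i + 1)) :
    ∑' i, d i * x ^ (i + 1) = x * (d 0 + ∑' i, d (i + 1) * x ^ (i + 1)) := by
  rw [hs.tsum_eq_zero_add, mul_add, ← tsum_mul_left]
  simp only [zero_add, pow_one, pow_succ' x (_ + 1)]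
  ring_nf

/-- The extremal case is `w = 2, 1, 2, 1, …`, whose value is `(2 * x + x ^ 2) / (1 - x ^ 2)`. -/
lemma tsum_mul_pow_succ_le_of_no_two_consecutive (hx0 : 0 ≤ x) (hx1 : x < 1) {w : ℕ → ℝ}
    (hw : ∀ i, w i = 1 ∨ w i = 2) (hw' : ∀ i, w i = 1 ∨ w (i + 1) = 1) :
    ∑' i, w i * x ^ (i + 1) ≤ (2 * x + x ^ 2) / (1 - x ^ 2) := by
  have hbdd : ∀ i, |w i| ≤ 2 := fun i => by rcases hw i with h | h <;> norm_num [h]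
  have hs := summable_mul_pow_succ hx0 hx1 hbdd
  have hx2 : x ^ 2 < 1 := by nlinarith
  have hpair : ∀ k, w (2 * k) * x ^ (2 * k + 1) + w (2 * k + 1) * x ^ (2 * k + 1 + 1)
      ≤ (2 * x + x ^ 2) * (x ^ 2) ^ k := by
    intro k
    have hblock : w (2 * k) * x + w (2 * k + 1) * x ^ 2 ≤ 2 * x + x ^ 2 := by
      have hxx : x ^ 2 ≤ x := by nlinarith
      rcases hw' (2 * k) with h | h <;> rw [h]
      · rcases hw (2 * k + 1) with h' | h' <;> rw [h'] <;> linarith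
      · rcases hw (2 * k) with h' | h' <;> rw [h'] <;> linarith
    calc _ = (w (2 * k) * x + w (2 * k + 1) * x ^ 2) * (x ^ 2) ^ k := by ring
      _ ≤ _ := mul_le_mul_of_nonneg_right hblock (by positivity)
  have heven : Summable fun k => w (2 * k) * x ^ (2 * k + 1) :=
    hs.comp_injective (mul_right_injective₀ two_ne_zero)
  have hodd : Summable fun k => w (2 * k + 1) * x ^ (2 * k + 1 + 1) :=
    hs.comp_injective ((add_left_injective 1).comp (mul_right_injective₀ two_ne_zero))
  calc ∑' i, w i * x ^ (i + 1)
      = ∑' k, (w (2 * k) * x ^ (2 * k + 1) + w (2 * k + 1) * x ^ (2 * k + 1 + 1)) := by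
        rw [heven.tsum_add hodd]
        exact (tsum_even_add_odd (f := fun i => w i * x ^ (i + 1)) heven hodd).symm
    _ ≤ ∑' k, (2 * x + x ^ 2) * (x ^ 2) ^ k :=
        (heven.add hodd).tsum_le_tsum hpair
          ((summable_geometric_of_lt_one (by positivity) hx2).mul_left _)
    _ = (2 * x + x ^ 2) / (1 - x ^ 2) := by
        rw [tsum_mul_left, tsum_geometric_of_lt_one (by positivity) hx2, div_eq_mul_inv]

/-- Writing `T n` for the value of the `n`-th tail, `T n = x * (d n + T (n + 1))` with
`|T (n + 1)| < 1` forces the integer `d n` to vanish once `T n = 0`. -/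
theorem eq_zero_of_tsum_mul_pow_succ_eq_zero (hx0 : 0 < x) (hx1 : x < 1) {d : ℕ → ℝ} {C : ℝ}
    (hC : ∀ i, |d i| ≤ C) (hint : ∀ i, ∃ z : ℤ, d i = z)
    (htail : ∀ n, |∑' i, d (i + n + 1) * x ^ (i + 1)| < 1)
    (h : ∑' i, d i * x ^ (i + 1) = 0) : d = 0 := by
  have hstep : ∀ n, ∑' i, d (i + n) * x ^ (i + 1) = 0 →
      d n = 0 ∧ ∑' i, d (i + n + 1) * x ^ (i + 1) = 0 := by
    intro n hn
    rw [tsum_mul_pow_succ_eq_mul_add (summable_mul_pow_succ hx0.le hx1 fun i => hC (i + n)),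
      mul_eq_zero, or_iff_right hx0.ne'] at hn
    simp only [zero_add, Nat.add_right_comm _ 1 n] at hn
    obtain ⟨z, hz⟩ := hint n
    have hdn : d n = 0 := by
      rw [hz, Int.cast_eq_zero, ← Int.abs_lt_one_iff, ← Int.cast_lt (R := ℝ), Int.cast_abs,
        Int.cast_one, ← hz, eq_neg_of_add_eq_zero_left hn, abs_neg]
      exact htail n
    exact ⟨hdn, by simpa [hdn] using hn⟩
  have hzero : ∀ n, ∑' i, d (i + n) * x ^ (i + 1) = 0 := by
    intro n
    induction n with
    | zero => simpa using h
    | succ n ih => exact (hstep n ih).2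
  funext n
  exact (hstep n (hzero n)).1

def IsDigitSeq (M : ℤ) (s : ℕ → ℝ) : Prop :=
  ∀ i, ∃ a : ℤ, 0 ≤ a ∧ a ≤ M ∧ s i = a

namespace IsDigitSeq

variable {M : ℤ} {s : ℕ → ℝ}

lemma mem_Icc (hs : IsDigitSeq M s) (i : ℕ) : s i ∈ Icc 0 (M : ℝ) := by
  obtain ⟨a, ha0, haM, hsa⟩ := hs i
  rw [hsa]
  exact ⟨by exact_mod_cast ha0, by exact_mod_cast haM⟩

lemma abs_le (hs : IsDigitSeq M s) (i : ℕ) : |s i| ≤ M :=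
  _root_.abs_le.mpr ⟨by linarith [(hs.mem_Icc i).1, (hs.mem_Icc i).2], (hs.mem_Icc i).2⟩

end IsDigitSeq

theorem eq_of_tsum_mul_pow_succ_eq {x : ℝ} (hx0 : 0 < x) (hx : 2 * x ^ 2 + 2 * x < 1) {M : ℤ}
    (hM : M * x < 1) {w v : ℕ → ℝ} (hw : ∀ i, w i = 1 ∨ w i = 2)
    (hw' : ∀ i, w i = 1 ∨ w (i + 1) = 1) (hv : IsDigitSeq M v)
    (h : ∑' i, w i * x ^ (i + 1) = ∑' i, v i * x ^ (i + 1)) : w = v := by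
  have hx1 : x < 1 := by nlinarith
  have hw_Icc : ∀ i, w i ∈ Icc (1 : ℝ) 2 := fun i => by rcases hw i with h | h <;> norm_num [h]
  have hw_abs : ∀ i, |w i| ≤ 2 := fun i =>
    abs_le.mpr ⟨by linarith [(hw_Icc i).1], (hw_Icc i).2⟩
  have hsub : ∀ n, ∑' i, (w (i + n) - v (i + n)) * x ^ (i + 1) =
      ∑' i, w (i + n) * x ^ (i + 1) - ∑' i, v (i + n) * x ^ (i + 1) := fun n => by
    simp_rw [sub_mul]
    exact (summable_mul_pow_succ hx0.le hx1 fun i => hw_abs (i + n)).tsum_sub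
      (summable_mul_pow_succ hx0.le hx1 fun i => hv.abs_le (i + n))
  refine sub_eq_zero.mp (eq_zero_of_tsum_mul_pow_succ_eq_zero hx0 hx1 (C := 2 + M)
    (fun i => ?_) (fun i => ?_) (fun n => ?_) ?_)
  · have := hw_Icc i
    have := hv.mem_Icc i
    simp only [Pi.sub_apply, mem_Icc] at *
    exact abs_le.mpr ⟨by linarith, by linarith⟩
  · obtain ⟨a, -, -, ha⟩ := hv i
    rcases hw i with h | h
    · exact ⟨1 - a, by simp [h, ha]⟩
    · exact ⟨2 - a, by simp [h, ha]⟩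
  · have hW := tsum_mul_pow_succ_mem_Icc hx0.le hx1 fun i => hw_Icc (i + n + 1)
    have hW' := tsum_mul_pow_succ_le_of_no_two_consecutive hx0.le hx1
      (fun i => hw (i + n + 1))
      (fun i => by simpa only [Nat.add_right_comm _ 1 n] using hw' (i + n + 1))
    have hV := tsum_mul_pow_succ_mem_Icc hx0.le hx1 fun i => hv.mem_Icc (i + n + 1)
    have hgap : 0 < (1 - M) * (x / (1 - x)) + 1 := by
      have hprod : ((1 - M) * (x / (1 - x)) + 1) * (1 - x) = 1 - M * x := by
        field_simp [(sub_pos.mpr hx1).ne']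
        ring
      exact pos_of_mul_pos_left (hprod ▸ sub_pos.mpr hM) (by linarith)
    have hlt : (2 * x + x ^ 2) / (1 - x ^ 2) < 1 := by
      rw [div_lt_one (by nlinarith)]
      linarith
    have := hsub (n + 1)
    simp only [← add_assoc] at this
    simp only [Pi.sub_apply, this, mem_Icc] at *
    exact abs_lt.mpr ⟨by nlinarith, by linarith⟩
  · simpa [sub_eq_zero] using (hsub 0).trans (sub_eq_zero.mpr h)

section NegativeBase

variable {β : ℝ} {M : ℤ}

def flipOdd (m : ℝ) (s : ℕ → ℝ) (i : ℕ) : ℝ := if Even i then s i else m - s i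

lemma flipOdd_involutive (m : ℝ) : Function.Involutive (flipOdd m) := by
  intro s
  funext i
  unfold flipOdd
  split_ifs <;> ring

lemma isDigitSeq_flipOdd {s : ℕ → ℝ} (hs : IsDigitSeq M s) : IsDigitSeq M (flipOdd M s) := by
  intro i
  obtain ⟨a, ha0, haM, hsa⟩ := hs i
  unfold flipOdd
  split_ifs
  · exact ⟨a, ha0, haM, hsa⟩
  · exact ⟨M - a, by omega, by omega, by rw [hsa]; push_cast; ring⟩

lemma div_neg_pow_succ_eq (hβ : β ≠ 0) (m : ℝ) (s : ℕ → ℝ) (i : ℕ) :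
    s i / (-β) ^ (i + 1) =
      (if Even i then 0 else m) * β⁻¹ ^ (i + 1) - flipOdd m s i * β⁻¹ ^ (i + 1) := by
  unfold flipOdd
  rw [inv_pow]
  rcases Nat.even_or_odd i with hi | hi
  · rw [if_pos hi, if_pos hi, (Even.add_one hi).neg_pow]
    field_simp
    ring
  · rw [if_neg (Nat.not_even_iff_odd.mpr hi), if_neg (Nat.not_even_iff_odd.mpr hi),
      (Odd.add_one hi).neg_pow]
    field_simp
    ring

lemma tsum_div_neg_pow_eq_sub (hβ : 1 < β) {s : ℕ → ℝ} (hs : IsDigitSeq M s) :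
    ∑' i, s i / (-β) ^ (i + 1) =
      ∑' i, (if Even i then 0 else (M : ℝ)) * β⁻¹ ^ (i + 1) -
        ∑' i, flipOdd M s i * β⁻¹ ^ (i + 1) := by
  have hx0 : 0 ≤ β⁻¹ := inv_nonneg.mpr (by linarith)
  have hx1 : β⁻¹ < 1 := inv_lt_one_of_one_lt₀ hβ
  have hM0 : (0 : ℝ) ≤ M := (hs.mem_Icc 0).1.trans (hs.mem_Icc 0).2
  simp_rw [div_neg_pow_succ_eq (by linarith : β ≠ 0) (M : ℝ) s]
  refine Summable.tsum_sub (summable_mul_pow_succ hx0 hx1 (C := M) fun i => ?_)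
    (summable_mul_pow_succ hx0 hx1 (isDigitSeq_flipOdd hs).abs_le)
  split_ifs
  · simpa using hM0
  · exact (abs_of_nonneg hM0).le

noncomputable def sparseDigits (S : Set ℕ) (i : ℕ) : ℝ :=
  1 + if Even i then S.indicator 1 (i / 2) else 0

lemma sparseDigits_eq_one_or_eq_two (S : Set ℕ) (i : ℕ) :
    sparseDigits S i = 1 ∨ sparseDigits S i = 2 := by
  unfold sparseDigits
  by_cases hi : i / 2 ∈ S <;> split_ifs <;> norm_num [hi]

lemma sparseDigits_eq_one_or_succ_eq_one (S : Set ℕ) (i : ℕ) :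
    sparseDigits S i = 1 ∨ sparseDigits S (i + 1) = 1 := by
  by_cases hi : Even i
  · simp [sparseDigits, Nat.even_add_one, hi]
  · simp [sparseDigits, hi]

lemma isDigitSeq_sparseDigits (hM : 2 ≤ M) (S : Set ℕ) : IsDigitSeq M (sparseDigits S) := by
  intro i
  rcases sparseDigits_eq_one_or_eq_two S i with h | h
  · exact ⟨1, by norm_num, by omega, by simp [h]⟩
  · exact ⟨2, by norm_num, hM, by simp [h]⟩

lemma sparseDigits_injective : Function.Injective sparseDigits := by
  intro S T h
  refine Set.indicator_one_inj ℝ (funext fun n => ?_)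
  simpa [sparseDigits] using congrFun h (2 * n)

theorem eq_flipOdd_sparseDigits (hβ : 2 * β⁻¹ ^ 2 + 2 * β⁻¹ < 1) (hM : 2 ≤ M) (hMβ : M < β)
    (S : Set ℕ) {s : ℕ → ℝ} (hs : IsDigitSeq M s)
    (h : ∑' i, s i / (-β) ^ (i + 1) = ∑' i, flipOdd M (sparseDigits S) i / (-β) ^ (i + 1)) :
    s = flipOdd M (sparseDigits S) := by
  have hβ2 : 2 < β := lt_of_le_of_lt (by exact_mod_cast hM) hMβ
  have hMx : M * β⁻¹ < 1 := by
    rw [← div_eq_mul_inv, div_lt_one (by linarith)]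
    exact hMβ
  have hsparse := isDigitSeq_flipOdd (isDigitSeq_sparseDigits hM S)
  rw [tsum_div_neg_pow_eq_sub (by linarith) hs, tsum_div_neg_pow_eq_sub (by linarith) hsparse,
    flipOdd_involutive, sub_right_inj] at h
  rw [eq_of_tsum_mul_pow_succ_eq (by positivity) hβ hMx (sparseDigits_eq_one_or_eq_two S)
    (sparseDigits_eq_one_or_succ_eq_one S) (isDigitSeq_flipOdd hs) h.symm, flipOdd_involutive]

end NegativeBase

lemma two_mul_inv_sq_add_two_mul_inv_lt_one {β : ℝ} (hβ : 1 + √3 < β) :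
    2 * β⁻¹ ^ 2 + 2 * β⁻¹ < 1 := by
  have h3 : 3 < (β - 1) ^ 2 := (Real.sqrt_lt' (by linarith [Real.sqrt_nonneg 3])).mp (by linarith)
  have hβ0 : 0 < β := by linarith [Real.sqrt_nonneg 3]
  have hsub : 1 - (2 * β⁻¹ ^ 2 + 2 * β⁻¹) = ((β - 1) ^ 2 - 3) / β ^ 2 := by
    field_simp
    ring
  exact sub_pos.mp (hsub ▸ div_pos (by linarith) (by positivity))

lemma not_countable_set {α : Type*} [Infinite α] : ¬ Countable (Set α) := by
  intro
  obtain ⟨g, hg⟩ := exists_injective_nat (Set α)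
  exact Function.cantor_injective _ ((Infinite.natEmbedding α).injective.comp hg)

theorem stmt18 (β : ℝ) (hβ : 1 + Real.sqrt 3 < β) (hni : ∀ n : ℕ, β ≠ n) :
    ¬ Set.Countable {x : ℝ | ∃! s : ℕ → ℝ,
        (∀ i, ∃ a : ℤ, 0 ≤ a ∧ a ≤ ⌊β⌋ ∧ s i = (a : ℝ)) ∧
        x = ∑' i : ℕ, s i / (-β) ^ (i + 1)} := by
  set A := {x : ℝ | ∃! s : ℕ → ℝ,
    (∀ i, ∃ a : ℤ, 0 ≤ a ∧ a ≤ ⌊β⌋ ∧ s i = (a : ℝ)) ∧ x = ∑' i : ℕ, s i / (-β) ^ (i + 1)}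
  have hβx := two_mul_inv_sq_add_two_mul_inv_lt_one hβ
  have hβ2 : 2 < β := by linarith [(Real.lt_sqrt zero_le_one).mpr (by norm_num : (1 : ℝ) ^ 2 < 3)]
  have hM : 2 ≤ ⌊β⌋ := Int.le_floor.mpr (by exact_mod_cast hβ2.le)
  have hMβ : (⌊β⌋ : ℝ) < β := by
    refine (Int.floor_le β).lt_of_ne fun h => hni ⌊β⌋.toNat ?_
    exact h.symm.trans (by exact_mod_cast (Int.toNat_of_nonneg (show 0 ≤ ⌊β⌋ by omega)).symm)
  set t : Set ℕ → ℕ → ℝ := fun S => flipOdd ⌊β⌋ (sparseDigits S)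
  have ht : ∀ S, IsDigitSeq ⌊β⌋ (t S) := fun S => isDigitSeq_flipOdd (isDigitSeq_sparseDigits hM S)
  have hval : ∀ S, ∑' i, t S i / (-β) ^ (i + 1) ∈ A := fun S =>
    ⟨t S, ⟨ht S, rfl⟩, fun s ⟨hs, h⟩ => eq_flipOdd_sparseDigits hβx hM hMβ S hs h.symm⟩
  have hinj : Function.Injective fun S => ∑' i, t S i / (-β) ^ (i + 1) := fun S T h =>
    sparseDigits_injective <| (flipOdd_involutive _).injective <|
      eq_flipOdd_sparseDigits hβx hM hMβ T (ht S) h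
  intro hcount
  have := hcount.to_subtype
  exact not_countable_set ((Set.injective_codRestrict hval).mpr hinj).countable
end PowerSeries
end

section
/- Let μ be the unique real root of x³ − x² − x − 1 = 0 (the Tribonacci constant, 1 < μ < 2). Then the set {x ∈ J_{−μ,{0,1}} : R_{−μ,{0,1}}(x) is a singleton} of numbers having a unique (−μ)-representation over the alphabet {0,1} is uncountable. -/
/-!
Let `s ≠ t` be `{0,1}`-sequences representing the same number. The digits `d = s - t ∈ {-1, 0, 1}`
have normalised remainders `T p = ∑ j, d (p + j) (-μ)⁻ʲ` with `T 0 = 0`, `T (p + 1) = μ (d p - T p)`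
and `(μ - 1) |T p| ≤ μ`. For the Tribonacci number this bound leaves almost no choice: after the
first nonzero digit `d k = 1` the remainders run through `μ, μ - μ², 1`, forcing the digits
`1, 1, -1`, followed by `1` or by `0, -1, 1`. So `s` contains `1 1 0 1` or `1 1 0 ? 0 1` (and the
complementary patterns if `d k = -1`). Sequences built from blocks `0 0 b b` contain neither, so
each of them is the unique representation of its value, and there are uncountably many of them.
-/

namespace NegBase

noncomputable def tail (β : ℝ) (d : ℕ → ℝ) (p : ℕ) : ℝ := ∑' j, d (p + j) / (-β) ^ j

def IsRemainderSeq (β : ℝ) (d T : ℕ → ℝ) : Prop :=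
  ∀ p, T (p + 1) = β * (d p - T p) ∧ (β - 1) * |T p| ≤ β

section Digits

variable {a b : ℝ} (ha : a = 0 ∨ a = 1) (hb : b = 0 ∨ b = 1)
include ha hb

lemma sub_mem_digits : a - b = -1 ∨ a - b = 0 ∨ a - b = 1 := by
  rcases ha with rfl | rfl <;> rcases hb with rfl | rfl <;> norm_num

lemma abs_sub_le_one : |a - b| ≤ 1 := by
  rcases ha with rfl | rfl <;> rcases hb with rfl | rfl <;> norm_num

lemma eq_one_and_eq_zero_of_sub_eq_one (h : a - b = 1) : a = 1 ∧ b = 0 := by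
  rcases ha with rfl | rfl <;> rcases hb with rfl | rfl <;> constructor <;> linarith

lemma eq_zero_and_eq_one_of_sub_eq_neg_one (h : a - b = -1) : a = 0 ∧ b = 1 := by
  rcases ha with rfl | rfl <;> rcases hb with rfl | rfl <;> constructor <;> linarith

end Digits

section Tail

variable {β : ℝ} {d : ℕ → ℝ}

lemma norm_div_neg_pow_le (hβ : 1 < β) (hd : ∀ i, |d i| ≤ 1) (j : ℕ) :
    ‖d j / (-β) ^ j‖ ≤ β⁻¹ ^ j := by
  rw [norm_div, norm_pow, norm_neg, Real.norm_eq_abs, Real.norm_eq_abs,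
    abs_of_pos (zero_lt_one.trans hβ), inv_pow, ← one_div]
  exact div_le_div_of_nonneg_right (hd j) (by positivity)

lemma summable_div_neg_pow (hβ : 1 < β) (hd : ∀ i, |d i| ≤ 1) :
    Summable fun j => d j / (-β) ^ j :=
  .of_norm_bounded (summable_geometric_of_lt_one (by positivity) (inv_lt_one_of_one_lt₀ hβ))
    (norm_div_neg_pow_le hβ hd)

lemma tail_eq_add (hβ : 1 < β) (hd : ∀ i, |d i| ≤ 1) (p : ℕ) :
    tail β d p = d p + tail β d (p + 1) / (-β) := by
  have hs := summable_div_neg_pow (d := fun j => d (p + j)) hβ (fun _ => hd _)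
  rw [tail, hs.tsum_eq_zero_add, tail, ← tsum_div_const]
  congr 1
  · simp
  · refine tsum_congr fun j => ?_
    rw [pow_succ, div_div, add_assoc, add_comm 1 j]

lemma mul_abs_tail_le (hβ : 1 < β) (hd : ∀ i, |d i| ≤ 1) (p : ℕ) :
    (β - 1) * |tail β d p| ≤ β := by
  have hq := inv_lt_one_of_one_lt₀ hβ
  have h := tsum_of_norm_bounded (summable_geometric_of_lt_one (by positivity) hq).hasSum
    (norm_div_neg_pow_le (d := fun j => d (p + j)) hβ (fun _ => hd _))
  rw [tsum_geometric_of_lt_one (by positivity) hq, Real.norm_eq_abs] at h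
  calc (β - 1) * |tail β d p| ≤ (β - 1) * (1 - β⁻¹)⁻¹ := by
        gcongr
        exact h
    _ = β := by
        have : β - 1 ≠ 0 := by linarith
        field_simp

lemma isRemainderSeq_tail (hβ : 1 < β) (hd : ∀ i, |d i| ≤ 1) :
    IsRemainderSeq β d (tail β d) := fun p => by
  refine ⟨?_, mul_abs_tail_le hβ hd p⟩
  have := tail_eq_add hβ hd p
  field_simp at this ⊢
  linarith

lemma tail_zero (hβ : β ≠ 0) :
    tail β d 0 = -β * ∑' i, d i / (-β) ^ (i + 1) := by
  simp only [tail, zero_add, pow_succ, ← div_div, tsum_div_const]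
  exact (mul_div_cancel₀ _ (neg_ne_zero.mpr hβ)).symm

lemma tail_sub_eq_zero (hβ : 1 < β) {s t : ℕ → ℝ} (hs : ∀ i, s i = 0 ∨ s i = 1)
    (ht : ∀ i, t i = 0 ∨ t i = 1)
    (h : ∑' i, s i / (-β) ^ (i + 1) = ∑' i, t i / (-β) ^ (i + 1)) :
    tail β (s - t) 0 = 0 := by
  have hsum : ∀ u : ℕ → ℝ, (∀ i, u i = 0 ∨ u i = 1) →
      Summable fun i => u i / (-β) ^ (i + 1) := fun u hu => by
    simpa only [pow_succ, ← div_div] using (summable_div_neg_pow hβ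
      fun i => by simpa using abs_sub_le_one (hu i) (.inl rfl)).div_const (-β)
  rw [tail_zero (by positivity)]
  simp only [Pi.sub_apply, sub_div]
  rw [(hsum s hs).tsum_sub (hsum t ht), h, sub_self, mul_zero]

end Tail

namespace IsRemainderSeq

variable {β : ℝ} {d T : ℕ → ℝ}

lemma neg (hW : IsRemainderSeq β d T) : IsRemainderSeq β (-d) (-T) := fun p => by
  refine ⟨?_, ?_⟩
  · simp only [Pi.neg_apply, (hW p).1]; ring
  · simpa only [Pi.neg_apply, abs_neg] using (hW p).2

lemma eq_zero_of_forall_lt (hW : IsRemainderSeq β d T) (h0 : T 0 = 0) {k : ℕ}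
    (hk : ∀ i < k, d i = 0) : T k = 0 := by
  induction k with
  | zero => exact h0
  | succ k ih =>
    rw [(hW k).1, ih fun i hi => hk i (by omega), hk k (by omega)]
    ring

end IsRemainderSeq

section Tribonacci

variable {μ : ℝ} (hμ1 : 1 < μ) (hμ2 : μ < 2) (hroot : μ ^ 3 = μ ^ 2 + μ + 1)
include hμ1 hroot

lemma lt_sq_sub_one : μ < μ ^ 2 - 1 := by
  -- `μ (μ ^ 2 - μ - 1) = 1`
  nlinarith

-- The digits `e` allowed at the states `T = μ, μ - μ², 1`, given the bound on the next state.
section Step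

variable {e : ℝ} (he : e = -1 ∨ e = 0 ∨ e = 1)
include he

lemma eq_one_of_step_from_self (h : (μ - 1) * |μ * (e - μ)| ≤ μ) : e = 1 := by
  have hg := lt_sq_sub_one hμ1 hroot
  rcases he with rfl | rfl | rfl
  · nlinarith [le_abs_self (μ * (-1 - μ)), neg_abs_le (μ * (-1 - μ))]
  · nlinarith [le_abs_self (μ * (0 - μ)), neg_abs_le (μ * (0 - μ))]
  · rfl

include hμ2 in
lemma eq_neg_one_of_step_from_sub_sq (h : (μ - 1) * |μ * (e - (μ - μ ^ 2))| ≤ μ) :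
    e = -1 := by
  have hg := lt_sq_sub_one hμ1 hroot
  rcases he with rfl | rfl | rfl
  · rfl
  · nlinarith [le_abs_self (μ * (0 - (μ - μ ^ 2))), neg_abs_le (μ * (0 - (μ - μ ^ 2)))]
  · nlinarith [le_abs_self (μ * (1 - (μ - μ ^ 2))), neg_abs_le (μ * (1 - (μ - μ ^ 2)))]

lemma ne_neg_one_of_step_from_one (h : (μ - 1) * |μ * (e - 1)| ≤ μ) : e ≠ -1 := by
  have hg := lt_sq_sub_one hμ1 hroot
  rintro rfl
  nlinarith [le_abs_self (μ * (-1 - 1)), neg_abs_le (μ * (-1 - 1))]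

end Step

variable {d T : ℕ → ℝ} (hd : ∀ p, d p = -1 ∨ d p = 0 ∨ d p = 1) (hW : IsRemainderSeq μ d T)
include hμ2 hd hW

lemma IsRemainderSeq.digits_of_state_eq_self {p : ℕ} (hp : T p = μ) :
    d p = 1 ∧ d (p + 1) = -1 ∧ T (p + 2) = 1 := by
  have h1 : T (p + 1) = μ * (d p - μ) := by rw [(hW p).1, hp]
  have hdp : d p = 1 :=
    eq_one_of_step_from_self hμ1 hroot (hd p) (h1 ▸ (hW (p + 1)).2)
  have h2 : T (p + 1) = μ - μ ^ 2 := by rw [h1, hdp]; ring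
  have h3 : T (p + 2) = μ * (d (p + 1) - (μ - μ ^ 2)) := by rw [(hW (p + 1)).1, h2]
  have hdp1 : d (p + 1) = -1 :=
    eq_neg_one_of_step_from_sub_sq hμ1 hμ2 hroot (hd (p + 1)) (h3 ▸ (hW (p + 2)).2)
  refine ⟨hdp, hdp1, ?_⟩
  rw [h3, hdp1]
  linear_combination hroot

lemma IsRemainderSeq.digits_of_state_eq_zero {k : ℕ} (hk : T k = 0) (hdk : d k = 1) :
    d (k + 1) = 1 ∧ d (k + 2) = -1 ∧ (d (k + 3) = 1 ∨ d (k + 4) = -1 ∧ d (k + 5) = 1) := by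
  obtain ⟨h1, h2, h3⟩ := hW.digits_of_state_eq_self hμ1 hμ2 hroot hd (p := k + 1)
    (by rw [(hW k).1, hk, hdk]; ring)
  refine ⟨h1, h2, ?_⟩
  have h4 : T (k + 4) = μ * (d (k + 3) - 1) := by rw [(hW (k + 3)).1, h3]
  have hne := ne_neg_one_of_step_from_one hμ1 hroot (hd (k + 3)) (h4 ▸ (hW (k + 4)).2)
  rcases hd (k + 3) with h | h | h
  · exact absurd h hne
  · have hdneg : ∀ p, (-d) p = -1 ∨ (-d) p = 0 ∨ (-d) p = 1 := fun p => by
      rcases hd p with h | h | h <;> simp [h]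
    obtain ⟨h5, h6, -⟩ := hW.neg.digits_of_state_eq_self hμ1 hμ2 hroot hdneg (p := k + 4)
      (by simp only [Pi.neg_apply, h4, h]; ring)
    simp only [Pi.neg_apply, neg_eq_iff_eq_neg, neg_neg] at h5 h6
    exact Or.inr ⟨h5, h6⟩
  · exact Or.inl h

end Tribonacci

open scoped Classical in
noncomputable def blockSeq (A : Set ℕ) (i : ℕ) : ℝ :=
  if 2 ≤ i % 4 ∧ i / 4 ∈ A then 1 else 0

section BlockSeq

variable {A : Set ℕ} {k : ℕ}

lemma blockSeq_mem (A : Set ℕ) (i : ℕ) : blockSeq A i = 0 ∨ blockSeq A i = 1 := by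
  unfold blockSeq
  split_ifs <;> simp

lemma two_le_mod_of_blockSeq_eq_one (h : blockSeq A k = 1) : 2 ≤ k % 4 := by
  by_contra hk
  simp [blockSeq, hk] at h

lemma blockSeq_succ_of_mod_eq_two (hk : k % 4 = 2) : blockSeq A (k + 1) = blockSeq A k := by
  unfold blockSeq
  split_ifs <;> grind

lemma blockSeq_of_mod_lt_two (hk : k % 4 < 2) : blockSeq A k = 0 := by
  simp [blockSeq, show ¬ 2 ≤ k % 4 by omega]

lemma blockSeq_injective : Function.Injective blockSeq := by
  intro A B h
  ext j
  have hj := congrFun h (4 * j + 2)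
  have h1 : (4 * j + 2) / 4 = j := by omega
  have h2 : 2 ≤ (4 * j + 2) % 4 := by omega
  by_cases hA : j ∈ A <;> by_cases hB : j ∈ B <;> simp_all [blockSeq]

lemma blockSeq_of_eq_one_of_succ_eq_one (h0 : blockSeq A k = 1) (h1 : blockSeq A (k + 1) = 1) :
    blockSeq A (k + 3) = 0 ∧ blockSeq A (k + 5) = blockSeq A (k + 4) := by
  have hk0 := two_le_mod_of_blockSeq_eq_one h0
  have hk1 := two_le_mod_of_blockSeq_eq_one h1
  exact ⟨blockSeq_of_mod_lt_two (by omega), blockSeq_succ_of_mod_eq_two (by omega)⟩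

lemma blockSeq_of_eq_zero_of_succ_eq_one (h0 : blockSeq A k = 0) (h1 : blockSeq A (k + 1) = 1) :
    blockSeq A (k + 2) = 1 ∧ blockSeq A (k + 3) = 0 := by
  have hk1 := two_le_mod_of_blockSeq_eq_one h1
  have hk : (k + 1) % 4 = 2 := by
    by_contra hk
    have := blockSeq_succ_of_mod_eq_two (A := A) (k := k) (by omega)
    rw [h0, h1] at this
    exact one_ne_zero this
  exact ⟨(blockSeq_succ_of_mod_eq_two hk).trans h1, blockSeq_of_mod_lt_two (by omega)⟩

end BlockSeq

section Uniqueness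

variable {μ : ℝ} (hμ1 : 1 < μ) (hμ2 : μ < 2) (hroot : μ ^ 3 = μ ^ 2 + μ + 1)
  {A : Set ℕ} {t T : ℕ → ℝ} (ht : ∀ i, t i = 0 ∨ t i = 1)
include hμ1 hμ2 hroot ht

lemma IsRemainderSeq.blockSeq_sub_ne_one (hW : IsRemainderSeq μ (blockSeq A - t) T) {k : ℕ}
    (hk : T k = 0) : blockSeq A k - t k ≠ 1 := by
  have hd p := sub_mem_digits (blockSeq_mem A p) (ht p)
  have hs p h := (eq_one_and_eq_zero_of_sub_eq_one (blockSeq_mem A p) (ht p) h).1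
  have hs' p h := (eq_zero_and_eq_one_of_sub_eq_neg_one (blockSeq_mem A p) (ht p) h).1
  intro hdk
  obtain ⟨h1, -, h3⟩ := hW.digits_of_state_eq_zero hμ1 hμ2 hroot hd hk hdk
  obtain ⟨h3', h45⟩ := blockSeq_of_eq_one_of_succ_eq_one (hs k hdk) (hs _ h1)
  rcases h3 with h3 | ⟨h4, h5⟩
  · exact one_ne_zero ((hs _ h3).symm.trans h3')
  · exact one_ne_zero ((hs _ h5).symm.trans (h45.trans (hs' _ h4)))

lemma IsRemainderSeq.blockSeq_sub_ne_neg_one (hW : IsRemainderSeq μ (blockSeq A - t) T)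
    {k : ℕ} (hk : T k = 0) : blockSeq A k - t k ≠ -1 := by
  have hW' : IsRemainderSeq μ (t - blockSeq A) (-T) := neg_sub (blockSeq A) t ▸ hW.neg
  have hd p := sub_mem_digits (ht p) (blockSeq_mem A p)
  have hs p h := (eq_zero_and_eq_one_of_sub_eq_neg_one (ht p) (blockSeq_mem A p) h).2
  have hs' p h := (eq_one_and_eq_zero_of_sub_eq_one (ht p) (blockSeq_mem A p) h).2
  intro hdk
  obtain ⟨h1, h2, h3⟩ := hW'.digits_of_state_eq_zero hμ1 hμ2 hroot hd (k := k) (by simp [hk])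
    (by linarith)
  obtain ⟨h3', h4'⟩ := blockSeq_of_eq_zero_of_succ_eq_one (hs' _ h1) (hs _ h2)
  rcases h3 with h3 | ⟨h4, -⟩
  · exact one_ne_zero (h3'.symm.trans (hs' _ h3))
  · exact one_ne_zero ((hs _ h4).symm.trans h4')

lemma eq_blockSeq_of_tsum_eq
    (h : ∑' i, t i / (-μ) ^ (i + 1) = ∑' i, blockSeq A i / (-μ) ^ (i + 1)) :
    t = blockSeq A := by
  have hd p := sub_mem_digits (blockSeq_mem A p) (ht p)
  have hW := isRemainderSeq_tail hμ1 fun p => abs_sub_le_one (blockSeq_mem A p) (ht p)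
  have h0 := tail_sub_eq_zero hμ1 (blockSeq_mem A) ht h.symm
  by_contra hne
  have hex : ∃ k, blockSeq A k - t k ≠ 0 := by
    simpa [sub_eq_zero, eq_comm] using Function.ne_iff.mp hne
  classical
  have hk := hW.eq_zero_of_forall_lt h0 fun i hi => not_not.mp (Nat.find_min hex hi)
  rcases hd (Nat.find hex) with h | h | h
  · exact hW.blockSeq_sub_ne_neg_one hμ1 hμ2 hroot ht hk h
  · exact Nat.find_spec hex h
  · exact hW.blockSeq_sub_ne_one hμ1 hμ2 hroot ht hk h

end Uniqueness

end NegBase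

theorem stmt19 (μ : ℝ) (hμ1 : 1 < μ) (hμ2 : μ < 2)
    (hroot : μ ^ 3 = μ ^ 2 + μ + 1) :
    ¬ Set.Countable {x : ℝ | ∃! s : ℕ → ℝ,
        (∀ i, s i = 0 ∨ s i = 1) ∧ x = ∑' i : ℕ, s i / (-μ) ^ (i + 1)} := by
  intro hS
  have hunique A {t} := NegBase.eq_blockSeq_of_tsum_eq hμ1 hμ2 hroot (A := A) (t := t)
  let f (A : Set ℕ) : {x : ℝ | ∃! s : ℕ → ℝ,
      (∀ i, s i = 0 ∨ s i = 1) ∧ x = ∑' i : ℕ, s i / (-μ) ^ (i + 1)} :=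
    ⟨_, NegBase.blockSeq A, ⟨NegBase.blockSeq_mem A, rfl⟩, fun _ ⟨ht, h⟩ => hunique A ht h.symm⟩
  have hf : Function.Injective f := fun A B hAB => NegBase.blockSeq_injective
    (hunique A (NegBase.blockSeq_mem B) (congrArg Subtype.val hAB).symm).symm
  have := hS.to_subtype
  have := hf.countable
  obtain ⟨g, hg⟩ := Countable.exists_injective_nat (Set ℕ)
  exact Function.cantor_injective g hg
end
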